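/- arXiv:math-ph/0211016 — 4 statements merged into one kernel-verified Lean document; each statement's English description precedes it below -/
import Mathlib

section
/- Let M, N₁, N₂, P be finite type I factors with M ⊇ N₁ ⊇ P and M ⊇ N₂ ⊇ P, with τ-preserving conditional expectations E_M^N between them. Then the following are equivalent: (1) the restriction of E_M^{N₁} to N₂ equals E_{N₂}^P; (2) the restriction of E_M^{N₂} to N₁ equals E_{N₁}^P; (3) P = N₁ ∩ N₂ and E_M^{N₁}E_M^{N₂} = E_M^{N₂}E_M^{N₁}; (4) E_M^{N₁}E_M^{N₂} = E_M^P; (5) E_M^{N₂}E_M^{N₁} = E_M^P. -/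
open scoped ComplexOrder

/-- Let `M, N₁, N₂, P` be finite type I factors with `M ⊇ N₁ ⊇ P` and
`M ⊇ N₂ ⊇ P`, with `τ`-preserving conditional expectations `E₁ = E_M^{N₁}`, `E₂ = E_M^{N₂}`,
`EP = E_M^{P}` between them.  Then the following are equivalent:
(1) the restriction of `E₁` to `N₂` is the conditional expectation `E_{N₂}^P`
    (equivalently, by uniqueness, `E₁ x = EP x` for `x ∈ N₂`);
(2) the restriction of `E₂` to `N₁` is `E_{N₁}^P`;
(3) `P = N₁ ∩ N₂` and `E₁ ∘ E₂ = E₂ ∘ E₁`;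
(4) `E₁ ∘ E₂ = EP`;
(5) `E₂ ∘ E₁ = EP`. -/
theorem commuting_square_tfae
    {M : Type*} [CStarAlgebra M] [FiniteDimensional ℂ M]
    (τ : M →L[ℂ] ℂ)
    (hτ1 : τ 1 = 1)
    (hτpos : ∀ x : M, 0 ≤ τ (star x * x))
    (hτtracial : ∀ x y : M, τ (x * y) = τ (y * x))
    (hτfaithful : ∀ x : M, τ (star x * x) = 0 → x = 0)
    (N₁ N₂ P : StarSubalgebra ℂ M)
    (hPN₁ : P ≤ N₁) (hPN₂ : P ≤ N₂)
    (E₁ E₂ EP : M → M)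
    (hE₁mem : ∀ x : M, E₁ x ∈ N₁)
    (hE₁τ : ∀ x : M, ∀ b ∈ N₁, τ (x * b) = τ (E₁ x * b))
    (hE₂mem : ∀ x : M, E₂ x ∈ N₂)
    (hE₂τ : ∀ x : M, ∀ b ∈ N₂, τ (x * b) = τ (E₂ x * b))
    (hEPmem : ∀ x : M, EP x ∈ P)
    (hEPτ : ∀ x : M, ∀ b ∈ P, τ (x * b) = τ (EP x * b)) :
    List.TFAE
      [ ∀ x ∈ N₂, E₁ x = EP x,
        ∀ x ∈ N₁, E₂ x = EP x,
        (P : Set M) = (N₁ : Set M) ∩ (N₂ : Set M) ∧ ∀ x : M, E₁ (E₂ x) = E₂ (E₁ x),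
        ∀ x : M, E₁ (E₂ x) = EP x,
        ∀ x : M, E₂ (E₁ x) = EP x ] := by

  have uniq : ∀ (N : StarSubalgebra ℂ M) (y z : M), y ∈ N → z ∈ N →
      (∀ b ∈ N, τ (y * b) = τ (z * b)) → y = z := by
    intro N y z hy hz h
    have hd : y - z ∈ N := sub_mem hy hz
    have h0 : τ ((y - z) * star (y - z)) = 0 := by
      have h' := h (star (y - z)) (star_mem hd)
      rw [sub_mul, map_sub, h', sub_self]
    have h1 : star (y - z) = 0 := hτfaithful (star (y - z)) (by rw [star_star]; exact h0)
    have h2 := congrArg star h1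
    rw [star_star, star_zero] at h2
    exact sub_eq_zero.mp h2
  have fix₁ : ∀ x ∈ N₁, E₁ x = x := fun x hx =>
    uniq N₁ _ _ (hE₁mem x) hx (fun b hb => (hE₁τ x b hb).symm)
  have fix₂ : ∀ x ∈ N₂, E₂ x = x := fun x hx =>
    uniq N₂ _ _ (hE₂mem x) hx (fun b hb => (hE₂τ x b hb).symm)
  have EPE₁ : ∀ x, EP (E₁ x) = EP x := fun x =>
    uniq P _ _ (hEPmem _) (hEPmem x) (fun b hb => by
      rw [← hEPτ (E₁ x) b hb, ← hE₁τ x b (hPN₁ hb), hEPτ x b hb])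
  have EPE₂ : ∀ x, EP (E₂ x) = EP x := fun x =>
    uniq P _ _ (hEPmem _) (hEPmem x) (fun b hb => by
      rw [← hEPτ (E₂ x) b hb, ← hE₂τ x b (hPN₂ hb), hEPτ x b hb])
  have key : ∀ (A B : StarSubalgebra ℂ M) (EA EB : M → M),
      P ≤ A → P ≤ B →
      (∀ x : M, EA x ∈ A) → (∀ x : M, ∀ b ∈ A, τ (x * b) = τ (EA x * b)) →
      (∀ x : M, EB x ∈ B) → (∀ x : M, ∀ b ∈ B, τ (x * b) = τ (EB x * b)) →
      (∀ x ∈ B, EA x = EP x) → ∀ x ∈ A, EB x = EP x := by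
    intro A B EA EB hPA hPB hEAmem hEAτ hEBmem hEBτ hAB x hx
    refine uniq B _ _ (hEBmem x) (hPB (hEPmem x)) ?_
    intro b hb
    have h1 : τ (EB x * b) = τ (EP b * EP x) := by
      rw [← hEBτ x b hb, hτtracial x b, hEAτ b x hx, hAB b hb, hτtracial (EP b) x,
        hEPτ x (EP b) (hEPmem b), hτtracial (EP x) (EP b)]
    have h2 : τ (EP x * b) = τ (EP b * EP x) := by
      rw [hτtracial (EP x) b, hEAτ b (EP x) (hPA (hEPmem x)), hAB b hb]
    exact h1.trans h2.symm
  tfae_have 1 → 2 := key N₁ N₂ E₁ E₂ hPN₁ hPN₂ hE₁mem hE₁τ hE₂mem hE₂τ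
  tfae_have 2 → 1 := key N₂ N₁ E₂ E₁ hPN₂ hPN₁ hE₂mem hE₂τ hE₁mem hE₁τ
  tfae_have 1 → 4 := fun h x => by rw [h (E₂ x) (hE₂mem x), EPE₂]
  tfae_have 4 → 1 := fun h x hx => by have h' := h x; rwa [fix₂ x hx] at h'
  tfae_have 2 → 5 := fun h x => by rw [h (E₁ x) (hE₁mem x), EPE₁]
  tfae_have 5 → 2 := fun h x hx => by have h' := h x; rwa [fix₁ x hx] at h'
  tfae_have 1 → 3 := by
    intro h1
    have h4 := tfae_1_to_4 h1
    have h5 := tfae_2_to_5 (tfae_1_to_2 h1)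
    refine ⟨Set.Subset.antisymm (fun x hx => ⟨hPN₁ hx, hPN₂ hx⟩) ?_,
      fun x => (h4 x).trans (h5 x).symm⟩
    rintro x ⟨hx1, hx2⟩
    have h' := h4 x
    rw [fix₂ x hx2, fix₁ x hx1] at h'
    rw [h']
    exact hEPmem x
  tfae_have 3 → 4 := by
    rintro ⟨hP, hcom⟩ x
    have hmem : E₁ (E₂ x) ∈ ((N₁ : Set M) ∩ (N₂ : Set M)) :=
      ⟨hE₁mem _, by rw [hcom]; exact hE₂mem _⟩
    rw [← hP] at hmem
    refine uniq P _ _ hmem (hEPmem x) fun b hb => ?_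
    rw [← hE₁τ (E₂ x) b (hPN₁ hb), ← hE₂τ x b (hPN₂ hb), hEPτ x b hb]
  tfae_finish
end

section
/- For the CAR algebra A over Z^ν with unique tracial state τ: for every subset I ⊆ Z^ν there exists a unique conditional expectation E_I : A → A(I) satisfying τ(ab) = τ(E_I(a)b) for all b ∈ A(I); moreover for any two subsets I, J one has E_I(A(J)) ⊆ A(I ∩ J) and E_I E_J = E_J E_I = E_{I∩J}. -/
/-!
Uniqueness is faithfulness of `τ`: if `E` and `E'` both qualify, then `d = E x - E' x` lies in
`A(I)` and `τ (d * d⋆) = 0`.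

For existence, fix a finite region `F` and a site `k ∈ F`. Averaging over conjugation by the
parity `1 - 2 a_k⋆ a_k`, and then over conjugation by the Majorana operator `a_k + a_k⋆` times the
Jordan–Wigner string of parities of `F \ {k}`, gives a `τ`-preserving contraction. Every
`x ∈ A(s)` with `s ⊆ F` can be written `b₀ + a_k b₁ + a_k⋆ b₂ + a_k⋆ a_k b₃` with `bᵢ ∈ A(s \ {k})`,
and the average sends it to `b₀ + b₃ / 2`, so the site `k` is traced out. Composing over the
sites of `F` outside `I` gives contractions `E_F`. By uniqueness, these agree on `A(G)` as soon
as `G ⊆ F`, so they converge along the finite regions, and the limit is the conditional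
expectation; it maps `A(J)` into `A(I ∩ J)`. The relations `E_I E_J = E_J E_I = E_{I ∩ J}`
follow by uniqueness again.
-/

open scoped ComplexOrder

/-- The C*-subalgebra `A(I)` of the CAR algebra associated to a region `I ⊆ ℤ^ν`. -/
noncomputable def carSub {ν : ℕ} {A : Type*} [CStarAlgebra A]
    (a : (Fin ν → ℤ) → A) (I : Set (Fin ν → ℤ)) : StarSubalgebra ℂ A :=
  (StarAlgebra.adjoin ℂ (a '' I)).topologicalClosure

/-- `E` is the `τ`-preserving conditional expectation of the CAR algebra onto `A(I)`:
`E x ∈ A(I)` and `τ (x * b) = τ (E x * b)` for all `b ∈ A(I)`. -/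
def IsCondExp {ν : ℕ} {A : Type*} [CStarAlgebra A]
    (a : (Fin ν → ℤ) → A) (τ : A →L[ℂ] ℂ) (I : Set (Fin ν → ℤ)) (E : A → A) : Prop :=
  (∀ x : A, E x ∈ carSub a I) ∧ ∀ x : A, ∀ b ∈ carSub a I, τ (x * b) = τ (E x * b)

theorem exists_finset_of_mem_adjoin_image {R σ A : Type*} [CommSemiring R] [StarRing R]
    [Semiring A] [StarRing A] [Algebra R A] [StarModule R A] [DecidableEq σ] {a : σ → A}
    {J : Set σ} {x : A} (hx : x ∈ StarAlgebra.adjoin R (a '' J)) :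
    ∃ G : Finset σ, ↑G ⊆ J ∧ x ∈ StarAlgebra.adjoin R (a '' G) := by
  have mono {G G' : Finset σ} (hG : G ⊆ G') {y : A} (hy : y ∈ StarAlgebra.adjoin R (a '' G)) :
      y ∈ StarAlgebra.adjoin R (a '' G') :=
    StarAlgebra.adjoin_mono (Set.image_mono (Finset.coe_subset.mpr hG)) hy
  induction hx using StarAlgebra.adjoin_induction with
  | mem y hy =>
    obtain ⟨j, hj, rfl⟩ := hy
    exact ⟨{j}, by simpa using hj, StarAlgebra.subset_adjoin R _ ⟨j, by simp, rfl⟩⟩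
  | algebraMap r => exact ⟨∅, by simp, algebraMap_mem _ r⟩
  | add y y' _ _ ih ih' =>
    obtain ⟨G, hG, hy⟩ := ih
    obtain ⟨G', hG', hy'⟩ := ih'
    exact ⟨G ∪ G', by simpa using ⟨hG, hG'⟩,
      add_mem (mono Finset.subset_union_left hy) (mono Finset.subset_union_right hy')⟩
  | mul y y' _ _ ih ih' =>
    obtain ⟨G, hG, hy⟩ := ih
    obtain ⟨G', hG', hy'⟩ := ih'
    exact ⟨G ∪ G', by simpa using ⟨hG, hG'⟩,
      mul_mem (mono Finset.subset_union_left hy) (mono Finset.subset_union_right hy')⟩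
  | star y _ ih =>
    obtain ⟨G, hG, hy⟩ := ih
    exact ⟨G, hG, star_mem hy⟩

section

variable {A : Type*} [CStarAlgebra A]

theorem commute_of_mem_starAlgebraAdjoin {g : A} (hg : IsSelfAdjoint g) {s : Set A}
    (hs : ∀ y ∈ s, Commute g y) {x : A} (hx : x ∈ StarAlgebra.adjoin ℂ s) : Commute g x := by
  have hle : StarAlgebra.adjoin ℂ s ≤ StarSubalgebra.centralizer ℂ {g} :=
    StarAlgebra.adjoin_le fun y hy => (StarSubalgebra.mem_centralizer_iff ℂ).mpr <| by
      simpa [hg.star_eq] using (hs y hy).eq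
  simpa [StarSubalgebra.mem_centralizer_iff, hg.star_eq, Commute, SemiconjBy] using (hle hx)

noncomputable def conjAvg (g : A) : A →ₗ[ℂ] A :=
  (2 : ℂ)⁻¹ • (LinearMap.id + LinearMap.mulLeftRight ℂ (g, g))

theorem conjAvg_apply (g x : A) : conjAvg g x = (2 : ℂ)⁻¹ • (x + g * x * g) := rfl

variable {g : A}

theorem conjAvg_mul_of_commute {b : A} (hb : Commute g b) (c : A) :
    conjAvg g (c * b) = conjAvg g c * b := by
  simp only [conjAvg_apply, smul_mul_assoc, add_mul, mul_assoc, hb.eq]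

theorem conjAvg_of_conj_eq {x y : A} (h : g * x * g = y) :
    conjAvg g x = (2 : ℂ)⁻¹ • (x + y) := by
  rw [conjAvg_apply, h]

theorem conjAvg_of_conj_eq_self {x : A} (h : g * x * g = x) : conjAvg g x = x := by
  rw [conjAvg_of_conj_eq h, ← two_smul ℂ, smul_smul, inv_mul_cancel₀ two_ne_zero, one_smul]

theorem conjAvg_of_conj_eq_neg {x : A} (h : g * x * g = -x) : conjAvg g x = 0 := by
  rw [conjAvg_of_conj_eq h, add_neg_cancel, smul_zero]

theorem conjAvg_of_commute (hg : g * g = 1) {x : A} (hx : Commute g x) : conjAvg g x = x :=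
  conjAvg_of_conj_eq_self (by rw [hx.eq, mul_assoc, hg, mul_one])

theorem conj_mul_of_mul_self (hg : g * g = 1) (x y : A) :
    g * (x * y) * g = (g * x * g) * (g * y * g) := by
  simp only [mul_assoc, ← mul_assoc g g, hg, one_mul]

theorem IsSelfAdjoint.mem_unitary_of_mul_self (hg : IsSelfAdjoint g) (hsq : g * g = 1) :
    g ∈ unitary A := by
  rw [Unitary.mem_iff, hg.star_eq, hsq]
  exact ⟨rfl, rfl⟩

theorem norm_conjAvg_le (hg : g ∈ unitary A) (x : A) : ‖conjAvg g x‖ ≤ ‖x‖ := by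
  have hconj : ‖g * x * g‖ = ‖x‖ := by
    rw [CStarRing.norm_mul_mem_unitary _ hg, CStarRing.norm_mem_unitary_mul _ hg]
  calc ‖conjAvg g x‖ ≤ ‖(2 : ℂ)⁻¹‖ * (‖x‖ + ‖g * x * g‖) := by
        rw [conjAvg_apply, norm_smul]; gcongr; exact norm_add_le _ _
    _ = ‖x‖ := by rw [hconj, norm_inv, Complex.norm_ofNat]; ring

theorem trace_conjAvg_mul (τ : A →L[ℂ] ℂ) (htr : ∀ x y : A, τ (x * y) = τ (y * x))
    (hg : g * g = 1) {b : A} (hb : Commute g b) (x : A) : τ (conjAvg g x * b) = τ (x * b) := by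
  have hconj : τ (g * x * g * b) = τ (x * b) := by
    calc τ (g * x * g * b) = τ (x * g * b * g) := by rw [mul_assoc g, mul_assoc g, htr]
      _ = τ (x * b) := by rw [mul_assoc x, hb.eq, mul_assoc, mul_assoc, hg, mul_one]
  rw [conjAvg_apply, smul_mul_assoc, map_smul, add_mul, map_add, hconj, ← two_smul ℂ, smul_smul]
  norm_num

theorem eq_of_forall_trace_mul_eq {τ : A →L[ℂ] ℂ} (hfaith : ∀ x : A, τ (star x * x) = 0 → x = 0)
    {S : StarSubalgebra ℂ A} {x y : A} (hx : x ∈ S) (hy : y ∈ S)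
    (h : ∀ b ∈ S, τ (x * b) = τ (y * b)) : x = y := by
  have hd : star (x - y) ∈ S := star_mem (sub_mem hx hy)
  have : star (x - y) = 0 := hfaith _ <| by
    rw [star_star, sub_mul, map_sub, h _ hd, sub_self]
  simpa [sub_eq_zero] using this

end

structure IsCAR {σ A : Type*} [CStarAlgebra A] (a : σ → A) : Prop where
  anticomm_star_self : ∀ i, star (a i) * a i + a i * star (a i) = 1
  anticomm_star_of_ne : ∀ i j, i ≠ j → star (a i) * a j + a j * star (a i) = 0
  anticomm : ∀ i j, a i * a j + a j * a i = 0

namespace CAR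

variable {σ A : Type*} [CStarAlgebra A] (a : σ → A)

noncomputable def parity (i : σ) : A := 1 - (2 : ℂ) • (star (a i) * a i)

def majorana (i : σ) : A := a i + star (a i)

noncomputable def stringParity (L : List σ) : A := (L.map (parity a)).prod

/-- Conjugation by `dressedMajorana a F k` exchanges `a k` and `star (a k)`; the string of
parities turns the anticommutation of `majorana a k` with `a j`, `j ∈ F \ {k}`, into
commutation. -/
noncomputable def dressedMajorana [DecidableEq σ] (F : Finset σ) (k : σ) : A :=
  majorana a k * stringParity a (F.erase k).toList

theorem isSelfAdjoint_parity (i : σ) : IsSelfAdjoint (parity a i) := by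
  simp [IsSelfAdjoint, parity, star_smul]

theorem isSelfAdjoint_majorana (i : σ) : IsSelfAdjoint (majorana a i) := by
  simp [IsSelfAdjoint, majorana, add_comm]

theorem stringParity_cons (i : σ) (L : List σ) :
    stringParity a (i :: L) = parity a i * stringParity a L := by
  simp [stringParity]

def siteDecomp (k : σ) (B : StarSubalgebra ℂ A) : Submodule ℂ A where
  carrier := {x | ∃ b₀ ∈ B, ∃ b₁ ∈ B, ∃ b₂ ∈ B, ∃ b₃ ∈ B,
    x = b₀ + a k * b₁ + star (a k) * b₂ + star (a k) * a k * b₃}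
  add_mem' := by
    rintro _ _ ⟨b₀, h₀, b₁, h₁, b₂, h₂, b₃, h₃, rfl⟩ ⟨c₀, g₀, c₁, g₁, c₂, g₂, c₃, g₃, rfl⟩
    exact ⟨_, add_mem h₀ g₀, _, add_mem h₁ g₁, _, add_mem h₂ g₂, _, add_mem h₃ g₃, by noncomm_ring⟩
  zero_mem' := ⟨0, zero_mem _, 0, zero_mem _, 0, zero_mem _, 0, zero_mem _, by simp⟩
  smul_mem' := by
    rintro r _ ⟨b₀, h₀, b₁, h₁, b₂, h₂, b₃, h₃, rfl⟩
    exact ⟨_, SMulMemClass.smul_mem r h₀, _, SMulMemClass.smul_mem r h₁,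
      _, SMulMemClass.smul_mem r h₂, _, SMulMemClass.smul_mem r h₃,
      by simp only [smul_add, mul_smul_comm]⟩

noncomputable def traceOutSite [DecidableEq σ] (F : Finset σ) (k : σ) : A →ₗ[ℂ] A :=
  conjAvg (dressedMajorana a F k) ∘ₗ conjAvg (parity a k)

noncomputable def traceOut [DecidableEq σ] (F : Finset σ) (L : List σ) : A →ₗ[ℂ] A :=
  (L.map (traceOutSite a F)).prod

open Classical in
noncomputable def condExpFin [DecidableEq σ] (I : Set σ) (F : Finset σ) : A →ₗ[ℂ] A :=
  traceOut a F (F.filter (· ∉ I)).toList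

noncomputable def condExp [DecidableEq σ] (I : Set σ) (x : A) : A :=
  Filter.limUnder Filter.atTop fun F : Finset σ => condExpFin a I F x

variable {a}

theorem traceOut_cons_apply [DecidableEq σ] {F : Finset σ} (k : σ) (L : List σ) (x : A) :
    traceOut a F (k :: L) x = traceOutSite a F k (traceOut a F L x) := by
  simp [traceOut]

variable {k : σ} {B : StarSubalgebra ℂ A}

theorem one_mem_siteDecomp : 1 ∈ siteDecomp a k B :=
  ⟨1, one_mem _, 0, zero_mem _, 0, zero_mem _, 0, zero_mem _, by simp⟩

theorem mul_mem_siteDecomp_of_anticomm {g : A} (hg : g ∈ B) (h₁ : g * a k = -(a k * g))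
    (h₂ : g * star (a k) = -(star (a k) * g)) {x : A} (hx : x ∈ siteDecomp a k B) :
    g * x ∈ siteDecomp a k B := by
  obtain ⟨b₀, h₀, b₁, h₁', b₂, h₂', b₃, h₃, rfl⟩ := hx
  refine ⟨g * b₀, mul_mem hg h₀, -(g * b₁), neg_mem (mul_mem hg h₁'), -(g * b₂),
    neg_mem (mul_mem hg h₂'), g * b₃, mul_mem hg h₃, ?_⟩
  have hn : g * (star (a k) * a k) = star (a k) * a k * g := by
    rw [← mul_assoc, h₂, neg_mul, mul_assoc, h₁, mul_neg, neg_neg, mul_assoc]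
  rw [mul_add, mul_add, mul_add, ← mul_assoc g (a k), h₁, ← mul_assoc g (star (a k)), h₂,
    ← mul_assoc g (star (a k) * a k), hn]
  noncomm_ring

end CAR

namespace IsCAR

open CAR

variable {σ A : Type*} [CStarAlgebra A] {a : σ → A} (h : IsCAR a)
include h

theorem mul_self (i : σ) : a i * a i = 0 := by
  have h2 : (2 : ℂ) • (a i * a i) = 0 := by rw [two_smul]; exact h.anticomm i i
  simpa using h2

theorem star_mul_star_self (i : σ) : star (a i) * star (a i) = 0 := by
  rw [← star_mul, h.mul_self, star_zero]

theorem mul_star_self (i : σ) : a i * star (a i) = 1 - star (a i) * a i :=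
  eq_sub_of_add_eq' (h.anticomm_star_self i)

theorem mul_star_mul_self (i : σ) : a i * star (a i) * a i = a i := by
  rw [h.mul_star_self, sub_mul, one_mul, mul_assoc, h.mul_self, mul_zero, sub_zero]

theorem star_mul_mul_star_self (i : σ) : star (a i) * a i * star (a i) = star (a i) := by
  simpa [mul_assoc] using congrArg star (h.mul_star_mul_self i)

theorem mul_anticomm (i j : σ) : a i * a j = -(a j * a i) :=
  eq_neg_of_add_eq_zero_left (h.anticomm i j)

theorem star_mul_anticomm_of_ne {i j : σ} (hij : i ≠ j) :
    star (a i) * a j = -(a j * star (a i)) :=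
  eq_neg_of_add_eq_zero_left (h.anticomm_star_of_ne i j hij)

theorem mul_star_anticomm_of_ne {i j : σ} (hij : i ≠ j) :
    a i * star (a j) = -(star (a j) * a i) :=
  eq_neg_of_add_eq_zero_right (h.anticomm_star_of_ne j i hij.symm)

theorem star_mul_star_anticomm (i j : σ) :
    star (a i) * star (a j) = -(star (a j) * star (a i)) := by
  simpa using congrArg star (h.mul_anticomm j i)

theorem parity_mul_self (i : σ) : parity a i * parity a i = 1 := by
  have hn : star (a i) * a i * (star (a i) * a i) = star (a i) * a i := by
    rw [← mul_assoc, h.star_mul_mul_star_self]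
  simp only [parity, sub_mul, mul_sub, one_mul, mul_one, smul_mul_assoc, mul_smul_comm, hn]
  module

theorem parity_mul_gen (i : σ) : parity a i * a i = a i := by
  simp [parity, sub_mul, mul_assoc, h.mul_self]

theorem gen_mul_parity (i : σ) : a i * parity a i = -a i := by
  simp only [parity, mul_sub, mul_one, mul_smul_comm, ← mul_assoc, h.mul_star_mul_self]
  module

theorem parity_conj_gen (i : σ) : parity a i * a i * parity a i = -a i := by
  rw [h.parity_mul_gen, h.gen_mul_parity]

theorem parity_conj_star_gen (i : σ) :
    parity a i * star (a i) * parity a i = -star (a i) := by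
  simpa [mul_assoc, (isSelfAdjoint_parity a i).star_eq] using congrArg star (h.parity_conj_gen i)

theorem parity_conj_number (i : σ) :
    parity a i * (star (a i) * a i) * parity a i = star (a i) * a i := by
  rw [conj_mul_of_mul_self (h.parity_mul_self i), h.parity_conj_gen, h.parity_conj_star_gen,
    neg_mul_neg]

theorem commute_parity_of_ne {i j : σ} (hij : i ≠ j) : Commute (parity a i) (a j) := by
  have hn : star (a i) * a i * a j = a j * (star (a i) * a i) := by
    rw [mul_assoc, h.mul_anticomm, mul_neg, ← mul_assoc, h.star_mul_anticomm_of_ne hij]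
    simp [mul_assoc]
  simp only [Commute, SemiconjBy, parity, sub_mul, mul_sub, one_mul, mul_one, smul_mul_assoc,
    mul_smul_comm, hn]

theorem commute_parity_star_of_ne {i j : σ} (hij : i ≠ j) :
    Commute (parity a i) (star (a j)) := by
  simpa [(isSelfAdjoint_parity a i).star_eq] using (h.commute_parity_of_ne hij).star_star

theorem commute_parity_parity (i j : σ) : Commute (parity a i) (parity a j) := by
  rcases eq_or_ne i j with rfl | hij
  · rfl
  · have hn : Commute (parity a i) (star (a j) * a j) :=
      (h.commute_parity_star_of_ne hij).mul_right (h.commute_parity_of_ne hij)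
    simp only [parity]
    exact (Commute.one_right _).sub_right (hn.smul_right (2 : ℂ))

theorem commute_parity_stringParity (i : σ) (L : List σ) :
    Commute (parity a i) (stringParity a L) :=
  Commute.list_prod_right _ _ fun y hy => by
    obtain ⟨j, -, rfl⟩ := List.mem_map.mp hy
    exact h.commute_parity_parity i j

theorem isSelfAdjoint_stringParity (L : List σ) : IsSelfAdjoint (stringParity a L) := by
  induction L with
  | nil => simp [IsSelfAdjoint, stringParity]
  | cons i L ih =>
    rw [IsSelfAdjoint, stringParity_cons, star_mul, ih.star_eq, (isSelfAdjoint_parity a i).star_eq,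
      (h.commute_parity_stringParity i L).eq]

theorem stringParity_mul_self (L : List σ) : stringParity a L * stringParity a L = 1 := by
  induction L with
  | nil => simp [stringParity]
  | cons i L ih =>
    rw [stringParity_cons, mul_assoc, ← mul_assoc _ (parity a i),
      ← (h.commute_parity_stringParity i L).eq, mul_assoc, ih, mul_one, h.parity_mul_self]

theorem commute_stringParity_of_notMem {L : List σ} {j : σ} (hj : j ∉ L) :
    Commute (stringParity a L) (a j) :=
  Commute.list_prod_left _ _ fun y hy => by
    obtain ⟨i, hi, rfl⟩ := List.mem_map.mp hy
    exact h.commute_parity_of_ne fun hij => hj (hij ▸ hi)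

theorem stringParity_anticomm_of_mem {L : List σ} (hL : L.Nodup) {j : σ} (hj : j ∈ L) :
    stringParity a L * a j = -(a j * stringParity a L) := by
  induction L with
  | nil => simp at hj
  | cons i L ih =>
    obtain ⟨hiL, hL⟩ := List.nodup_cons.mp hL
    rw [stringParity_cons, mul_assoc]
    rcases List.mem_cons.mp hj with rfl | hjL
    · rw [(h.commute_stringParity_of_notMem hiL).eq, ← mul_assoc, h.parity_mul_gen, ← mul_assoc,
        h.gen_mul_parity, neg_mul, neg_neg]
    · have hij : i ≠ j := fun hij => hiL (hij ▸ hjL)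
      rw [ih hL hjL, mul_neg, ← mul_assoc, (h.commute_parity_of_ne hij).eq, mul_assoc]

theorem majorana_mul_self (i : σ) : majorana a i * majorana a i = 1 := by
  simp only [majorana, mul_add, add_mul, h.mul_self, h.star_mul_star_self, zero_add, add_zero]
  exact h.anticomm_star_self i

theorem majorana_conj_gen (i : σ) : majorana a i * a i * majorana a i = star (a i) := by
  rw [majorana, add_mul, h.mul_self, zero_add, mul_add, mul_assoc, h.mul_self, mul_zero, zero_add,
    h.star_mul_mul_star_self]

theorem majorana_anticomm_of_ne {i j : σ} (hij : i ≠ j) :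
    majorana a i * a j = -(a j * majorana a i) := by
  simp only [majorana, add_mul, mul_add, h.mul_anticomm i j, h.star_mul_anticomm_of_ne hij,
    neg_add]

theorem commute_majorana_stringParity {L : List σ} {k : σ} (hk : k ∉ L) :
    Commute (majorana a k) (stringParity a L) :=
  ((h.commute_stringParity_of_notMem hk).add_right
    (by simpa [(h.isSelfAdjoint_stringParity L).star_eq] using
      (h.commute_stringParity_of_notMem hk).star_star)).symm

section Dressed

variable [DecidableEq σ] (F : Finset σ) (k : σ)

omit h in
theorem notMem_toList_erase : k ∉ (F.erase k).toList := by simp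

theorem isSelfAdjoint_dressedMajorana : IsSelfAdjoint (dressedMajorana a F k) := by
  rw [IsSelfAdjoint, dressedMajorana, star_mul, (h.isSelfAdjoint_stringParity _).star_eq,
    (isSelfAdjoint_majorana a k).star_eq,
    (h.commute_majorana_stringParity (notMem_toList_erase F k)).eq]

theorem dressedMajorana_mul_self : dressedMajorana a F k * dressedMajorana a F k = 1 := by
  have hc := h.commute_majorana_stringParity (notMem_toList_erase F k)
  rw [dressedMajorana, mul_assoc, ← mul_assoc _ (majorana a k), ← hc.eq, mul_assoc,
    h.stringParity_mul_self, mul_one, h.majorana_mul_self]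

theorem dressedMajorana_conj_gen :
    dressedMajorana a F k * a k * dressedMajorana a F k = star (a k) := by
  have hc := h.commute_majorana_stringParity (notMem_toList_erase F k)
  have hs := h.commute_stringParity_of_notMem (notMem_toList_erase F k)
  calc dressedMajorana a F k * a k * dressedMajorana a F k
      = majorana a k * a k * majorana a k *
          (stringParity a (F.erase k).toList * stringParity a (F.erase k).toList) := by
        simp only [dressedMajorana, mul_assoc, hs.left_comm, hc.symm.left_comm]
    _ = star (a k) := by rw [h.stringParity_mul_self, mul_one, h.majorana_conj_gen]

theorem dressedMajorana_conj_star_gen :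
    dressedMajorana a F k * star (a k) * dressedMajorana a F k = a k := by
  simpa [mul_assoc, (h.isSelfAdjoint_dressedMajorana F k).star_eq] using
    congrArg star (h.dressedMajorana_conj_gen F k)

theorem commute_dressedMajorana_of_mem {j : σ} (hjF : j ∈ F) (hjk : j ≠ k) :
    Commute (dressedMajorana a F k) (a j) := by
  have hj : j ∈ (F.erase k).toList := by simp [hjF, hjk]
  rw [Commute, SemiconjBy, dressedMajorana, mul_assoc,
    h.stringParity_anticomm_of_mem (Finset.nodup_toList _) hj, mul_neg, ← mul_assoc,
    h.majorana_anticomm_of_ne hjk.symm, neg_mul, neg_neg, mul_assoc]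

end Dressed

theorem commute_parity_of_mem_adjoin {k : σ} {t : Set σ} (hk : k ∉ t) {b : A}
    (hb : b ∈ StarAlgebra.adjoin ℂ (a '' t)) : Commute (parity a k) b :=
  commute_of_mem_starAlgebraAdjoin (isSelfAdjoint_parity a k)
    (by rintro _ ⟨j, hj, rfl⟩; exact h.commute_parity_of_ne fun hkj => hk (hkj ▸ hj)) hb

theorem commute_dressedMajorana_of_mem_adjoin [DecidableEq σ] {F : Finset σ} {k : σ} {t : Set σ}
    (hk : k ∉ t) (htF : t ⊆ F) {b : A} (hb : b ∈ StarAlgebra.adjoin ℂ (a '' t)) :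
    Commute (dressedMajorana a F k) b :=
  commute_of_mem_starAlgebraAdjoin (h.isSelfAdjoint_dressedMajorana F k)
    (by
      rintro _ ⟨j, hj, rfl⟩
      exact h.commute_dressedMajorana_of_mem F k (htF hj) fun hjk => hk (hjk ▸ hj)) hb

theorem gen_mul_mem_siteDecomp {k : σ} {B : StarSubalgebra ℂ A} {x : A}
    (hx : x ∈ siteDecomp a k B) : a k * x ∈ siteDecomp a k B := by
  obtain ⟨b₀, h₀, b₁, h₁, b₂, h₂, b₃, h₃, rfl⟩ := hx
  refine ⟨b₂, h₂, b₀ + b₃, add_mem h₀ h₃, 0, zero_mem _, -b₂, neg_mem h₂, ?_⟩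
  have e₁ : a k * (a k * b₁) = 0 := by rw [← mul_assoc, h.mul_self, zero_mul]
  have e₂ : a k * (star (a k) * b₂) = b₂ - star (a k) * a k * b₂ := by
    rw [← mul_assoc, h.mul_star_self, sub_mul, one_mul]
  have e₃ : a k * (star (a k) * a k * b₃) = a k * b₃ := by
    rw [← mul_assoc, ← mul_assoc, h.mul_star_mul_self]
  rw [mul_add, mul_add, mul_add, e₁, e₂, e₃]
  noncomm_ring

theorem star_gen_mul_mem_siteDecomp {k : σ} {B : StarSubalgebra ℂ A} {x : A}
    (hx : x ∈ siteDecomp a k B) : star (a k) * x ∈ siteDecomp a k B := by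
  obtain ⟨b₀, h₀, b₁, h₁, b₂, h₂, b₃, h₃, rfl⟩ := hx
  refine ⟨0, zero_mem _, 0, zero_mem _, b₀, h₀, b₁, h₁, ?_⟩
  have e₂ : star (a k) * (star (a k) * b₂) = 0 := by
    rw [← mul_assoc, h.star_mul_star_self, zero_mul]
  have e₃ : star (a k) * (star (a k) * a k * b₃) = 0 := by
    rw [← mul_assoc, ← mul_assoc, h.star_mul_star_self, zero_mul, zero_mul]
  rw [mul_add, mul_add, mul_add, e₂, e₃, ← mul_assoc]
  noncomm_ring

theorem mem_siteDecomp (k : σ) {s : Set σ} {x : A} (hx : x ∈ StarAlgebra.adjoin ℂ (a '' s)) :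
    x ∈ siteDecomp a k (StarAlgebra.adjoin ℂ (a '' (s \ {k}))) := by
  set B := StarAlgebra.adjoin ℂ (a '' (s \ {k}))
  have hB {j : σ} (hj : j ∈ s) (hjk : j ≠ k) : a j ∈ B :=
    StarAlgebra.subset_adjoin ℂ _ ⟨j, ⟨hj, hjk⟩, rfl⟩
  suffices key : ∀ y ∈ Algebra.adjoin ℂ (a '' s ∪ star (a '' s)), ∀ z ∈ siteDecomp a k B,
      y * z ∈ siteDecomp a k B by
    simpa using key x hx 1 one_mem_siteDecomp
  intro y hy
  induction hy using Algebra.adjoin_induction with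
  | mem y hy =>
    intro z hz
    rcases hy with ⟨j, hj, rfl⟩ | hy
    · rcases eq_or_ne j k with rfl | hjk
      · exact h.gen_mul_mem_siteDecomp hz
      · exact mul_mem_siteDecomp_of_anticomm (hB hj hjk) (h.mul_anticomm j k)
          (h.mul_star_anticomm_of_ne hjk) hz
    · obtain ⟨j, hj, hjy⟩ := Set.mem_star.mp hy
      rw [← star_star y, ← hjy]
      rcases eq_or_ne j k with rfl | hjk
      · exact h.star_gen_mul_mem_siteDecomp hz
      · exact mul_mem_siteDecomp_of_anticomm (star_mem (hB hj hjk))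
          (h.star_mul_anticomm_of_ne hjk) (h.star_mul_star_anticomm j k) hz
  | algebraMap r =>
    intro z hz
    rw [← Algebra.smul_def]
    exact Submodule.smul_mem _ r hz
  | add y y' _ _ ihy ihy' =>
    intro z hz
    rw [add_mul]
    exact add_mem (ihy z hz) (ihy' z hz)
  | mul y y' _ _ ihy ihy' =>
    intro z hz
    rw [mul_assoc]
    exact ihy _ (ihy' z hz)

section TraceOutSite

variable [DecidableEq σ] {F : Finset σ} {k : σ}

theorem traceOutSite_mem_of_mem_siteDecomp {B : StarSubalgebra ℂ A}
    (hu : ∀ b ∈ B, Commute (parity a k) b) (hw : ∀ b ∈ B, Commute (dressedMajorana a F k) b)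
    {x : A} (hx : x ∈ siteDecomp a k B) : traceOutSite a F k x ∈ B := by
  obtain ⟨b₀, h₀, b₁, h₁, b₂, h₂, b₃, h₃, rfl⟩ := hx
  have hwn : conjAvg (dressedMajorana a F k) (star (a k) * a k) = (2 : ℂ)⁻¹ • 1 := by
    rw [conjAvg_of_conj_eq (by rw [conj_mul_of_mul_self (h.dressedMajorana_mul_self F k),
      h.dressedMajorana_conj_gen, h.dressedMajorana_conj_star_gen]), h.anticomm_star_self]
  have hu' : conjAvg (parity a k) (b₀ + a k * b₁ + star (a k) * b₂ + star (a k) * a k * b₃) =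
      b₀ + star (a k) * a k * b₃ := by
    rw [map_add, map_add, map_add, conjAvg_mul_of_commute (hu _ h₁),
      conjAvg_mul_of_commute (hu _ h₂), conjAvg_mul_of_commute (hu _ h₃),
      conjAvg_of_commute (h.parity_mul_self k) (hu _ h₀),
      conjAvg_of_conj_eq_neg (h.parity_conj_gen k),
      conjAvg_of_conj_eq_neg (h.parity_conj_star_gen k),
      conjAvg_of_conj_eq_self (h.parity_conj_number k)]
    simp
  rw [traceOutSite, LinearMap.comp_apply, hu', map_add, conjAvg_mul_of_commute (hw _ h₃),
    conjAvg_of_commute (h.dressedMajorana_mul_self F k) (hw _ h₀), hwn, smul_mul_assoc, one_mul]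
  exact add_mem h₀ (SMulMemClass.smul_mem _ h₃)

theorem traceOutSite_mem {s : Set σ} (hsF : s ⊆ F) {x : A}
    (hx : x ∈ StarAlgebra.adjoin ℂ (a '' s)) :
    traceOutSite a F k x ∈ StarAlgebra.adjoin ℂ (a '' (s \ {k})) :=
  h.traceOutSite_mem_of_mem_siteDecomp
    (fun _ => h.commute_parity_of_mem_adjoin fun hk => hk.2 rfl)
    (fun _ => h.commute_dressedMajorana_of_mem_adjoin (fun hk => hk.2 rfl)
      (Set.sdiff_subset.trans hsF))
    (h.mem_siteDecomp k hx)

theorem norm_traceOutSite_le (x : A) : ‖traceOutSite a F k x‖ ≤ ‖x‖ :=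
  (norm_conjAvg_le ((h.isSelfAdjoint_dressedMajorana F k).mem_unitary_of_mul_self
    (h.dressedMajorana_mul_self F k)) _).trans
    (norm_conjAvg_le ((isSelfAdjoint_parity a k).mem_unitary_of_mul_self
      (h.parity_mul_self k)) x)

theorem trace_traceOutSite_mul (τ : A →L[ℂ] ℂ) (htr : ∀ x y : A, τ (x * y) = τ (y * x))
    {t : Set σ} (hk : k ∉ t) (htF : t ⊆ F) {b : A} (hb : b ∈ StarAlgebra.adjoin ℂ (a '' t))
    (x : A) : τ (traceOutSite a F k x * b) = τ (x * b) := by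
  rw [traceOutSite, LinearMap.comp_apply,
    trace_conjAvg_mul τ htr (h.dressedMajorana_mul_self F k)
      (h.commute_dressedMajorana_of_mem_adjoin hk htF hb),
    trace_conjAvg_mul τ htr (h.parity_mul_self k) (h.commute_parity_of_mem_adjoin hk hb)]

end TraceOutSite

section TraceOut

variable [DecidableEq σ] {F : Finset σ}

theorem traceOut_mem (L : List σ) {s : Set σ} (hsF : s ⊆ F) {x : A}
    (hx : x ∈ StarAlgebra.adjoin ℂ (a '' s)) :
    traceOut a F L x ∈ StarAlgebra.adjoin ℂ (a '' (s \ {j | j ∈ L})) := by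
  induction L with
  | nil => simpa [traceOut] using hx
  | cons k L ih =>
    rw [traceOut_cons_apply]
    have hs : s \ {j | j ∈ k :: L} = (s \ {j | j ∈ L}) \ {k} := by
      ext j
      simp only [List.mem_cons, Set.mem_sdiff, Set.mem_ofPred_eq, Set.mem_singleton_iff]
      tauto
    rw [hs]
    exact h.traceOutSite_mem (Set.sdiff_subset.trans hsF) ih

theorem norm_traceOut_le (L : List σ) (x : A) : ‖traceOut a F L x‖ ≤ ‖x‖ := by
  induction L with
  | nil => simp [traceOut]
  | cons k L ih => exact (traceOut_cons_apply k L x ▸ h.norm_traceOutSite_le _).trans ih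

theorem trace_traceOut_mul (τ : A →L[ℂ] ℂ) (htr : ∀ x y : A, τ (x * y) = τ (y * x))
    {L : List σ} {t : Set σ} (hL : ∀ k ∈ L, k ∉ t) (htF : t ⊆ F) {b : A}
    (hb : b ∈ StarAlgebra.adjoin ℂ (a '' t)) (x : A) :
    τ (traceOut a F L x * b) = τ (x * b) := by
  induction L with
  | nil => simp [traceOut]
  | cons k L ih =>
    rw [traceOut_cons_apply, h.trace_traceOutSite_mul τ htr (hL k List.mem_cons_self) htF hb,
      ih fun j hj => hL j (List.mem_cons_of_mem k hj)]

end TraceOut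

section CondExpFin

variable [DecidableEq σ] {I : Set σ} {F : Finset σ}

theorem condExpFin_mem {s : Set σ} (hsF : s ⊆ F) {x : A}
    (hx : x ∈ StarAlgebra.adjoin ℂ (a '' s)) :
    condExpFin a I F x ∈ StarAlgebra.adjoin ℂ (a '' (s ∩ I)) := by
  refine StarAlgebra.adjoin_mono (Set.image_mono ?_) (h.traceOut_mem _ hsF hx)
  classical
  refine fun j ⟨hjs, hj⟩ => ⟨hjs, by_contra fun hjI => hj ?_⟩
  exact Finset.mem_toList.mpr (Finset.mem_filter.mpr ⟨hsF hjs, hjI⟩)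

theorem norm_condExpFin_le (x : A) : ‖condExpFin a I F x‖ ≤ ‖x‖ :=
  h.norm_traceOut_le _ x

theorem trace_condExpFin_mul (τ : A →L[ℂ] ℂ) (htr : ∀ x y : A, τ (x * y) = τ (y * x))
    {t : Set σ} (htF : t ⊆ F) (htI : t ⊆ I) {b : A} (hb : b ∈ StarAlgebra.adjoin ℂ (a '' t))
    (x : A) : τ (condExpFin a I F x * b) = τ (x * b) := by
  classical
  refine h.trace_traceOut_mul τ htr (fun k hk hkt => ?_) htF hb x
  exact (Finset.mem_filter.mp (Finset.mem_toList.mp hk)).2 (htI hkt)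

theorem condExpFin_eq_of_subset (τ : A →L[ℂ] ℂ) (htr : ∀ x y : A, τ (x * y) = τ (y * x))
    (hfaith : ∀ x : A, τ (star x * x) = 0 → x = 0) {s : Set σ} {F' : Finset σ} (hsF : s ⊆ F)
    (hsF' : s ⊆ F') {x : A} (hx : x ∈ StarAlgebra.adjoin ℂ (a '' s)) :
    condExpFin a I F x = condExpFin a I F' x :=
  eq_of_forall_trace_mul_eq hfaith (h.condExpFin_mem hsF hx) (h.condExpFin_mem hsF' hx)
    fun _ hb => by
      rw [h.trace_condExpFin_mul τ htr (Set.inter_subset_left.trans hsF) Set.inter_subset_right hb,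
        h.trace_condExpFin_mul τ htr (Set.inter_subset_left.trans hsF') Set.inter_subset_right hb]

end CondExpFin

section CondExp

open Filter Topology

variable [DecidableEq σ]
  (hgen : (StarAlgebra.adjoin ℂ (a '' Set.univ)).topologicalClosure = ⊤)
  (τ : A →L[ℂ] ℂ) (htr : ∀ x y : A, τ (x * y) = τ (y * x))
  (hfaith : ∀ x : A, τ (star x * x) = 0 → x = 0) (I : Set σ)

include hgen htr hfaith in
theorem cauchySeq_condExpFin (x : A) : CauchySeq fun F : Finset σ => condExpFin a I F x := by
  rw [Metric.cauchySeq_iff']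
  intro ε hε
  have hx : x ∈ closure (StarAlgebra.adjoin ℂ (a '' Set.univ) : Set A) := by
    rw [← StarSubalgebra.topologicalClosure_coe, hgen]; trivial
  obtain ⟨p, hp, hxp⟩ := Metric.mem_closure_iff.mp hx (ε / 2) (half_pos hε)
  obtain ⟨G, -, hpG⟩ := exists_finset_of_mem_adjoin_image hp
  refine ⟨G, fun F hGF => ?_⟩
  have hEp : condExpFin a I F p = condExpFin a I G p :=
    h.condExpFin_eq_of_subset τ htr hfaith (Finset.coe_subset.mpr hGF) subset_rfl hpG
  calc dist (condExpFin a I F x) (condExpFin a I G x)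
      = ‖condExpFin a I F (x - p) - condExpFin a I G (x - p)‖ := by
        rw [dist_eq_norm, map_sub, map_sub, hEp, sub_sub_sub_cancel_right]
    _ ≤ ‖x - p‖ + ‖x - p‖ := norm_sub_le_of_le (h.norm_condExpFin_le _) (h.norm_condExpFin_le _)
    _ < ε := by rw [← dist_eq_norm]; linarith

include hgen htr hfaith in
theorem tendsto_condExpFin (x : A) :
    Tendsto (fun F : Finset σ => condExpFin a I F x) atTop (𝓝 (condExp a I x)) :=
  tendsto_nhds_limUnder <|
    cauchySeq_tendsto_of_complete (h.cauchySeq_condExpFin hgen τ htr hfaith I x)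

include hgen htr hfaith in
theorem condExp_eq_condExpFin {G : Finset σ} {p : A} (hp : p ∈ StarAlgebra.adjoin ℂ (a '' G)) :
    condExp a I p = condExpFin a I G p :=
  tendsto_nhds_unique (h.tendsto_condExpFin hgen τ htr hfaith I p) <|
    tendsto_const_nhds.congr' <| (eventually_ge_atTop G).mono fun _ hGF =>
      h.condExpFin_eq_of_subset τ htr hfaith subset_rfl (Finset.coe_subset.mpr hGF) hp

include hgen htr hfaith in
theorem lipschitzWith_condExp : LipschitzWith 1 (condExp a I) :=
  LipschitzWith.of_dist_le_mul fun x y => by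
    rw [NNReal.coe_one, one_mul]
    refine le_of_tendsto ((h.tendsto_condExpFin hgen τ htr hfaith I x).dist
      (h.tendsto_condExpFin hgen τ htr hfaith I y)) (Eventually.of_forall fun F => ?_)
    rw [dist_eq_norm, dist_eq_norm, ← map_sub]
    exact h.norm_condExpFin_le _

include hgen htr hfaith in
theorem condExp_mem (J : Set σ) {x : A}
    (hx : x ∈ (StarAlgebra.adjoin ℂ (a '' J)).topologicalClosure) :
    condExp a I x ∈ (StarAlgebra.adjoin ℂ (a '' (I ∩ J))).topologicalClosure := by
  rw [← SetLike.mem_coe, StarSubalgebra.topologicalClosure_coe] at hx ⊢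
  refine map_mem_closure (h.lipschitzWith_condExp hgen τ htr hfaith I).continuous hx fun p hp => ?_
  obtain ⟨G, hGJ, hpG⟩ := exists_finset_of_mem_adjoin_image hp
  rw [SetLike.mem_coe, h.condExp_eq_condExpFin hgen τ htr hfaith I hpG]
  refine StarAlgebra.adjoin_mono (Set.image_mono ?_) (h.condExpFin_mem subset_rfl hpG)
  exact fun j ⟨hjG, hjI⟩ => ⟨hjI, hGJ hjG⟩

include hgen htr hfaith in
theorem trace_mul_condExp {b : A} (hb : b ∈ (StarAlgebra.adjoin ℂ (a '' I)).topologicalClosure)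
    (x : A) : τ (x * b) = τ (condExp a I x * b) := by
  rw [← SetLike.mem_coe, StarSubalgebra.topologicalClosure_coe] at hb
  refine closure_minimal (fun b hb => ?_) (isClosed_eq (τ.continuous.comp (continuous_const_mul x))
    (τ.continuous.comp (continuous_const_mul _))) hb
  obtain ⟨H, hHI, hbH⟩ := exists_finset_of_mem_adjoin_image hb
  refine tendsto_nhds_unique (tendsto_const_nhds.congr' ?_)
    ((τ.continuous.tendsto _).comp ((h.tendsto_condExpFin hgen τ htr hfaith I x).mul_const b))
  exact (eventually_ge_atTop H).mono fun F hHF =>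
    (h.trace_condExpFin_mul τ htr (Finset.coe_subset.mpr hHF) hHI hbH x).symm

end CondExp

end IsCAR

section IsCondExp

variable {ν : ℕ} {A : Type*} [CStarAlgebra A] {a : (Fin ν → ℤ) → A} {τ : A →L[ℂ] ℂ}
  {I J : Set (Fin ν → ℤ)} {E E' : A → A}

theorem carSub_mono (hIJ : I ⊆ J) : carSub a I ≤ carSub a J :=
  StarSubalgebra.topologicalClosure_mono (StarAlgebra.adjoin_mono (Set.image_mono hIJ))

theorem IsCondExp.unique (hfaith : ∀ x : A, τ (star x * x) = 0 → x = 0)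
    (hE : IsCondExp a τ I E) (hE' : IsCondExp a τ I E') : E = E' :=
  funext fun x => eq_of_forall_trace_mul_eq hfaith (hE.1 x) (hE'.1 x) fun b hb => by
    rw [← hE.2 x b hb, ← hE'.2 x b hb]

theorem IsCondExp.comp (hE : IsCondExp a τ I E) (hE' : IsCondExp a τ J E')
    (hloc : ∀ x ∈ carSub a J, E x ∈ carSub a (I ∩ J)) : IsCondExp a τ (I ∩ J) (E ∘ E') :=
  ⟨fun x => hloc _ (hE'.1 x), fun x b hb => by
    rw [hE'.2 x b (carSub_mono Set.inter_subset_right hb),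
      hE.2 _ b (carSub_mono Set.inter_subset_left hb), Function.comp_apply]⟩

end IsCondExp

theorem car_conditional_expectations_exist_unique_and_commute_general
    {ν : ℕ} {A : Type*} [CStarAlgebra A]
    (a : (Fin ν → ℤ) → A)
    (hCAR₁ : ∀ i j, star (a i) * a j + a j * star (a i) = if i = j then (1 : A) else 0)
    (hCAR₂ : ∀ i j, a i * a j + a j * a i = 0)
    (hgen : carSub a Set.univ = ⊤)
    (τ : A →L[ℂ] ℂ)
    (hτtracial : ∀ x y : A, τ (x * y) = τ (y * x))
    (hτfaithful : ∀ x : A, τ (star x * x) = 0 → x = 0) :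
    (∀ I : Set (Fin ν → ℤ), ∃! E : A → A, IsCondExp a τ I E) ∧
    (∀ (I J : Set (Fin ν → ℤ)) (EI EJ EIJ : A → A),
      IsCondExp a τ I EI → IsCondExp a τ J EJ → IsCondExp a τ (I ∩ J) EIJ →
        (∀ x ∈ carSub a J, EI x ∈ carSub a (I ∩ J)) ∧
        (∀ x : A, EI (EJ x) = EIJ x) ∧ (∀ x : A, EJ (EI x) = EIJ x)) := by
  have hCAR : IsCAR a :=
    ⟨fun i => by simpa using hCAR₁ i i, fun i j hij => by simpa [hij] using hCAR₁ i j, hCAR₂⟩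
  have hloc (I J) : ∀ x ∈ carSub a J, CAR.condExp a I x ∈ carSub a (I ∩ J) :=
    fun _ => hCAR.condExp_mem hgen τ hτtracial hτfaithful I J
  have hE (I) : IsCondExp a τ I (CAR.condExp a I) :=
    ⟨fun x => by simpa using hloc I Set.univ x (hgen ▸ trivial),
      fun x _ hb => hCAR.trace_mul_condExp hgen τ hτtracial hτfaithful I hb x⟩
  refine ⟨fun I => ⟨_, hE I, fun E hE' => hE'.unique hτfaithful (hE I)⟩,
    fun I J EI EJ EIJ hI hJ hIJ => ?_⟩
  obtain rfl := hI.unique hτfaithful (hE I)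
  obtain rfl := hJ.unique hτfaithful (hE J)
  have hJI := hJ.comp hI (hloc J I)
  rw [Set.inter_comm] at hJI
  exact ⟨hloc I J, congrFun ((hI.comp hJ (hloc I J)).unique hτfaithful hIJ),
    congrFun (hJI.unique hτfaithful hIJ)⟩

/-- For the CAR algebra `A` over `ℤ^ν` with unique tracial state `τ`: for
every subset `I ⊆ ℤ^ν` there exists a unique conditional expectation `E_I : A → A(I)` with
`τ (x * b) = τ (E_I x * b)` for all `b ∈ A(I)`; moreover for any two subsets `I`, `J` one has
`E_I (A(J)) ⊆ A(I ∩ J)` and `E_I ∘ E_J = E_J ∘ E_I = E_{I∩J}`. -/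
theorem car_conditional_expectations_exist_unique_and_commute
    {ν : ℕ} {A : Type*} [CStarAlgebra A]
    (a : (Fin ν → ℤ) → A)
    (hCAR₁ : ∀ i j, star (a i) * a j + a j * star (a i) = if i = j then (1 : A) else 0)
    (hCAR₂ : ∀ i j, a i * a j + a j * a i = 0)
    (hgen : carSub a Set.univ = ⊤)
    (τ : A →L[ℂ] ℂ)
    (hτ1 : τ 1 = 1)
    (hτpos : ∀ x : A, 0 ≤ τ (star x * x))
    (hτtracial : ∀ x y : A, τ (x * y) = τ (y * x))
    (hτfaithful : ∀ x : A, τ (star x * x) = 0 → x = 0) :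
    (∀ I : Set (Fin ν → ℤ), ∃! E : A → A, IsCondExp a τ I E) ∧
    (∀ (I J : Set (Fin ν → ℤ)) (EI EJ EIJ : A → A),
      IsCondExp a τ I EI → IsCondExp a τ J EJ → IsCondExp a τ (I ∩ J) EIJ →
        (∀ x ∈ carSub a J, EI x ∈ carSub a (I ∩ J)) ∧
        (∀ x : A, EI (EJ x) = EIJ x) ∧ (∀ x : A, EJ (EI x) = EIJ x)) :=
  car_conditional_expectations_exist_unique_and_commute_general a hCAR₁ hCAR₂ hgen τ hτtracial
    hτfaithful
end

section
/- In the CAR algebra A over Z^ν, for any countable family {I_n} of subsets of Z^ν, the intersection of the subalgebras equals the subalgebra of the intersection: ⋂_n A(I_n) = A(⋂_n I_n). -/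
set_option linter.unusedSectionVars false

namespace CARHelper

variable {ν : ℕ} {A : Type*} [CStarAlgebra A] {a : (Fin ν → ℤ) → A}

local notation "X" => (Fin ν → ℤ)

/-- number operator -/
noncomputable def np (a : X → A) (p : X) : A := star (a p) * a p
/-- self-adjoint unitary -/
noncomputable def up (a : X → A) (p : X) : A := a p + star (a p)
/-- gauge flip unitary -/
noncomputable def vp (a : X → A) (p : X) : A := 1 - (2:ℂ) • np a p

section basics
variable (hCAR₁ : ∀ i j, star (a i) * a j + a j * star (a i) = if i = j then (1 : A) else 0)
  (hCAR₂ : ∀ i j, a i * a j + a j * a i = 0)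

include hCAR₁ hCAR₂

theorem aa (p : X) : a p * a p = 0 := by
  have h2 : (2:ℂ) • (a p * a p) = 0 := by rw [two_smul]; exact hCAR₂ p p
  rcases smul_eq_zero.mp h2 with h | h
  · exact absurd h two_ne_zero
  · exact h

theorem saa (p : X) : star (a p) * star (a p) = 0 := by
  rw [← star_mul, aa hCAR₁ hCAR₂, star_zero]

theorem anti (p q : X) : a p * a q = -(a q * a p) :=
  eq_neg_of_add_eq_zero_left (hCAR₂ p q)

theorem santi {p q : X} (h : p ≠ q) : star (a p) * a q = -(a q * star (a p)) := by
  have := hCAR₁ p q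
  rw [if_neg h] at this
  exact eq_neg_of_add_eq_zero_left this

theorem asanti {p q : X} (h : p ≠ q) : a q * star (a p) = -(star (a p) * a q) := by
  rw [santi hCAR₁ hCAR₂ h, neg_neg]

theorem sasanti {p q : X} (h : p ≠ q) : star (a p) * star (a q) = -(star (a q) * star (a p)) := by
  have := congrArg star (anti hCAR₁ hCAR₂ q p)
  rw [star_mul, star_neg, star_mul] at this
  exact this

theorem ccr (p : X) : star (a p) * a p + a p * star (a p) = 1 := by
  have := hCAR₁ p p; rwa [if_pos rfl] at this

theorem a_mul_sa (p : X) : a p * star (a p) = 1 - np a p := by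
  exact eq_sub_of_add_eq' (ccr hCAR₁ hCAR₂ p)

theorem np_sa (p : X) : star (np a p) = np a p := by
  rw [np, star_mul, star_star]

theorem np_mul_a (p : X) : np a p * a p = 0 := by
  rw [np, mul_assoc, aa hCAR₁ hCAR₂, mul_zero]

theorem a_mul_np (p : X) : a p * np a p = a p := by
  rw [np, ← mul_assoc, a_mul_sa hCAR₁ hCAR₂, sub_mul, one_mul, np, mul_assoc,
    aa hCAR₁ hCAR₂, mul_zero, sub_zero]

theorem sa_mul_np (p : X) : star (a p) * np a p = 0 := by
  rw [np, ← mul_assoc, saa hCAR₁ hCAR₂, zero_mul]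

theorem np_mul_sa (p : X) : np a p * star (a p) = star (a p) := by
  rw [np, mul_assoc, a_mul_sa hCAR₁ hCAR₂, mul_sub, mul_one]
  rw [sa_mul_np hCAR₁ hCAR₂, sub_zero]

theorem np_idem (p : X) : np a p * np a p = np a p := by
  have h := a_mul_np hCAR₁ hCAR₂ p
  calc np a p * np a p = star (a p) * (a p * np a p) := by rw [np, mul_assoc]
  _ = np a p := by rw [h, np]

theorem np_comm_a {p q : X} (h : p ≠ q) : np a p * a q = a q * np a p := by
  rw [np, mul_assoc, anti hCAR₁ hCAR₂ p q, mul_neg, ← mul_assoc,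
    santi hCAR₁ hCAR₂ h, neg_mul, neg_neg, mul_assoc]

theorem np_comm_sa {p q : X} (h : p ≠ q) : np a p * star (a q) = star (a q) * np a p := by
  have hqp : q ≠ p := h.symm
  rw [np, mul_assoc, asanti hCAR₁ hCAR₂ hqp]
  rw [mul_neg, ← mul_assoc, sasanti hCAR₁ hCAR₂ h, neg_mul, neg_neg, mul_assoc]


theorem vp_sa (p : X) : star (vp a p) = vp a p := by
  simp [vp, star_sub, star_smul, np_sa hCAR₁ hCAR₂]

theorem vp_mul_a (p : X) : vp a p * a p = a p := by
  rw [vp, sub_mul, one_mul, smul_mul_assoc, np_mul_a hCAR₁ hCAR₂, smul_zero, sub_zero]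

theorem a_mul_vp (p : X) : a p * vp a p = -(a p) := by
  rw [vp, mul_sub, mul_one, mul_smul_comm, a_mul_np hCAR₁ hCAR₂, two_smul]
  abel

theorem vp_mul_sa (p : X) : vp a p * star (a p) = -(star (a p)) := by
  rw [vp, sub_mul, one_mul, smul_mul_assoc, np_mul_sa hCAR₁ hCAR₂, two_smul]
  abel

theorem sa_mul_vp (p : X) : star (a p) * vp a p = star (a p) := by
  rw [vp, mul_sub, mul_one, mul_smul_comm, sa_mul_np hCAR₁ hCAR₂, smul_zero, sub_zero]

theorem vp_mul_vp (p : X) : vp a p * vp a p = 1 := by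
  have h4 : ((2:ℂ) • np a p) * ((2:ℂ) • np a p) = (4:ℂ) • np a p := by
    rw [smul_mul_smul_comm, np_idem hCAR₁ hCAR₂]; norm_num
  rw [vp, sub_mul, one_mul, mul_sub, mul_one, h4]
  module

theorem vp_comm_a {p q : X} (h : p ≠ q) : vp a p * a q = a q * vp a p := by
  rw [vp, sub_mul, mul_sub, one_mul, mul_one, smul_mul_assoc, mul_smul_comm,
    np_comm_a hCAR₁ hCAR₂ h]

theorem vp_comm_sa {p q : X} (h : p ≠ q) : vp a p * star (a q) = star (a q) * vp a p := by
  rw [vp, sub_mul, mul_sub, one_mul, mul_one, smul_mul_assoc, mul_smul_comm,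
    np_comm_sa hCAR₁ hCAR₂ h]

theorem up_sa (p : X) : star (up a p) = up a p := by
  simp [up, star_add, add_comm]

theorem up_mul_up (p : X) : up a p * up a p = 1 := by
  rw [up, add_mul, mul_add, mul_add, aa hCAR₁ hCAR₂, saa hCAR₁ hCAR₂, zero_add, add_zero,
    add_comm]
  exact ccr hCAR₁ hCAR₂ p

theorem up_mul_np (p : X) : up a p * np a p = a p := by
  rw [up, add_mul, a_mul_np hCAR₁ hCAR₂, sa_mul_np hCAR₁ hCAR₂, add_zero]

theorem np_mul_up (p : X) : np a p * up a p = star (a p) := by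
  rw [up, mul_add, np_mul_a hCAR₁ hCAR₂, np_mul_sa hCAR₁ hCAR₂, zero_add]

theorem a_mul_up (p : X) : a p * up a p = 1 - np a p := by
  rw [up, mul_add, aa hCAR₁ hCAR₂, a_mul_sa hCAR₁ hCAR₂, zero_add]

theorem up_anti_a {p q : X} (h : p ≠ q) : up a p * a q = -(a q * up a p) := by
  rw [up, add_mul, mul_add, anti hCAR₁ hCAR₂ p q, santi hCAR₁ hCAR₂ h]
  abel

theorem up_anti_sa {p q : X} (h : p ≠ q) : up a p * star (a q) = -(star (a q) * up a p) := by
  rw [up, add_mul, mul_add, asanti hCAR₁ hCAR₂ h.symm, sasanti hCAR₁ hCAR₂ h]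
  abel

theorem up_anticomm {p r : X} (h : p ≠ r) : up a p * up a r = -(up a r * up a p) := by
  calc up a p * up a r = up a p * a r + up a p * star (a r) := by
        rw [show up a r = a r + star (a r) from rfl, mul_add]
  _ = -(a r * up a p) + -(star (a r) * up a p) := by
        rw [up_anti_a hCAR₁ hCAR₂ h, up_anti_sa hCAR₁ hCAR₂ h]
  _ = -((a r + star (a r)) * up a p) := by rw [add_mul]; abel
  _ = -(up a r * up a p) := by rw [show up a r = a r + star (a r) from rfl]


theorem np_comm_up {p r : X} (h : p ≠ r) : np a p * up a r = up a r * np a p := by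
  rw [show up a r = a r + star (a r) from rfl, mul_add, np_comm_a hCAR₁ hCAR₂ h,
    np_comm_sa hCAR₁ hCAR₂ h, ← add_mul]

theorem uu_star (p r : X) : star (up a p * up a r) = up a r * up a p := by
  rw [star_mul, up_sa hCAR₁ hCAR₂, up_sa hCAR₁ hCAR₂]

theorem uu_mul_star (p r : X) :
    (up a p * up a r) * (up a r * up a p) = 1 := by
  rw [mul_assoc, ← mul_assoc (up a r), up_mul_up hCAR₁ hCAR₂, one_mul, up_mul_up hCAR₁ hCAR₂]

theorem star_uu_mul (p r : X) :
    (up a r * up a p) * (up a p * up a r) = 1 := uu_mul_star hCAR₁ hCAR₂ r p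

theorem guu_np {p r : X} (h : p ≠ r) :
    (up a p * up a r) * np a p * (up a r * up a p) = 1 - np a p := by
  rw [mul_assoc (up a p) (up a r) (np a p), ← np_comm_up hCAR₁ hCAR₂ h,
    ← mul_assoc (up a p), up_mul_np hCAR₁ hCAR₂, mul_assoc (a p),
    ← mul_assoc (up a r), up_mul_up hCAR₁ hCAR₂, one_mul, a_mul_up hCAR₁ hCAR₂]

theorem uu_comm_a {p r q : X} (hp : p ≠ q) (hr : r ≠ q) :
    (up a p * up a r) * a q = a q * (up a p * up a r) := by
  rw [mul_assoc, up_anti_a hCAR₁ hCAR₂ hr, mul_neg, ← mul_assoc,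
    up_anti_a hCAR₁ hCAR₂ hp, neg_mul, neg_neg, mul_assoc]

theorem uu_comm_sa {p r q : X} (hp : p ≠ q) (hr : r ≠ q) :
    (up a p * up a r) * star (a q) = star (a q) * (up a p * up a r) := by
  rw [mul_assoc, up_anti_sa hCAR₁ hCAR₂ hr, mul_neg, ← mul_assoc,
    up_anti_sa hCAR₁ hCAR₂ hp, neg_mul, neg_neg, mul_assoc]

end basics


section phimap

/-- averaging with a unitary -/
noncomputable def phi (g : A) : A →ₗ[ℂ] A where
  toFun x := (2:ℂ)⁻¹ • (x + g * x * star g)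
  map_add' x y := by
    simp only [mul_add, add_mul]
    module
  map_smul' c x := by
    simp only [RingHom.id_apply, mul_smul_comm, smul_mul_assoc]
    module

theorem phi_apply (g x : A) : phi g x = (2:ℂ)⁻¹ • (x + g * x * star g) := rfl

theorem norm_one_le : ‖(1:A)‖ ≤ 1 := by
  have h := CStarRing.norm_star_mul_self (x := (1:A))
  rw [star_one, one_mul] at h
  nlinarith [norm_nonneg (1:A), sq_nonneg (‖(1:A)‖ - 1)]

theorem norm_le_one_of_unit {g : A} (h : star g * g = 1) : ‖g‖ ≤ 1 := by
  have h1 := CStarRing.norm_star_mul_self (x := g)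
  rw [h] at h1
  have := norm_one_le (A := A)
  nlinarith [norm_nonneg g]

theorem phi_norm_le {g : A} (hg : ‖g‖ ≤ 1) (x : A) : ‖phi g x‖ ≤ ‖x‖ := by
  have h1 : ‖g * x * star g‖ ≤ ‖x‖ := by
    calc ‖g * x * star g‖ ≤ ‖g * x‖ * ‖star g‖ := norm_mul_le _ _
    _ ≤ (‖g‖ * ‖x‖) * ‖star g‖ := by
        apply mul_le_mul_of_nonneg_right (norm_mul_le _ _) (norm_nonneg _)
    _ ≤ (1 * ‖x‖) * 1 := by
        rw [norm_star]
        apply mul_le_mul (mul_le_mul_of_nonneg_right hg (norm_nonneg _)) hg (norm_nonneg _)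
        positivity
    _ = ‖x‖ := by ring
  calc ‖phi g x‖ = ‖(2:ℂ)⁻¹‖ * ‖x + g * x * star g‖ := norm_smul _ _
  _ ≤ ‖(2:ℂ)⁻¹‖ * (‖x‖ + ‖g * x * star g‖) := by
      apply mul_le_mul_of_nonneg_left (norm_add_le _ _) (norm_nonneg _)
  _ ≤ ‖(2:ℂ)⁻¹‖ * (‖x‖ + ‖x‖) := by
      apply mul_le_mul_of_nonneg_left (by linarith) (norm_nonneg _)
  _ = ‖x‖ := by
      simp only [norm_inv, Complex.norm_ofNat]
      ring

theorem phi_fix {g c : A} (hcomm : g * c = c * g) (hunit : g * star g = 1) : phi g c = c := by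
  rw [phi_apply, hcomm, mul_assoc, hunit, mul_one, ← two_smul ℂ c, smul_smul]
  norm_num

end phimap


section parity
open StarAlgebra

/-- even elements w.r.t. site p -/
def Ev (a : X → A) (p : X) : Set A :=
  {c | a p * c = c * a p ∧ star (a p) * c = c * star (a p)}

/-- odd elements w.r.t. site p -/
def Od (a : X → A) (p : X) : Set A :=
  {c | a p * c = -(c * a p) ∧ star (a p) * c = -(c * star (a p))}

theorem one_mem_Ev (p : X) : (1:A) ∈ Ev a p := by constructor <;> simp

theorem ev_mul_ev {p : X} {c d : A} (hc : c ∈ Ev a p) (hd : d ∈ Ev a p) :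
    c * d ∈ Ev a p := by
  constructor
  · rw [← mul_assoc, hc.1, mul_assoc, hd.1, mul_assoc]
  · rw [← mul_assoc, hc.2, mul_assoc, hd.2, mul_assoc]

theorem ev_mul_od {p : X} {c d : A} (hc : c ∈ Ev a p) (hd : d ∈ Od a p) :
    c * d ∈ Od a p := by
  constructor
  · rw [← mul_assoc, hc.1, mul_assoc, hd.1, mul_neg, mul_assoc]
  · rw [← mul_assoc, hc.2, mul_assoc, hd.2, mul_neg, mul_assoc]

theorem od_mul_ev {p : X} {c d : A} (hc : c ∈ Od a p) (hd : d ∈ Ev a p) :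
    c * d ∈ Od a p := by
  constructor
  · rw [← mul_assoc, hc.1, neg_mul, mul_assoc, hd.1, mul_assoc]
  · rw [← mul_assoc, hc.2, neg_mul, mul_assoc, hd.2, mul_assoc]

theorem od_mul_od {p : X} {c d : A} (hc : c ∈ Od a p) (hd : d ∈ Od a p) :
    c * d ∈ Ev a p := by
  constructor
  · rw [← mul_assoc, hc.1, neg_mul, mul_assoc, hd.1, mul_neg, neg_neg, mul_assoc]
  · rw [← mul_assoc, hc.2, neg_mul, mul_assoc, hd.2, mul_neg, neg_neg, mul_assoc]

theorem star_Ev {p : X} {c : A} (hc : c ∈ Ev a p) : star c ∈ Ev a p := by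
  constructor
  · have := congrArg star hc.2
    rw [star_mul, star_mul, star_star] at this
    exact this.symm
  · have := congrArg star hc.1
    rw [star_mul, star_mul] at this
    exact this.symm

theorem star_Od {p : X} {c : A} (hc : c ∈ Od a p) : star c ∈ Od a p := by
  constructor
  · have := congrArg star hc.2
    rw [star_mul, star_neg, star_mul, star_star] at this
    rw [this, neg_neg]
  · have := congrArg star hc.1
    rw [star_mul, star_neg, star_mul] at this
    rw [this, neg_neg]

end parity

section gset
open StarAlgebra Submodule

variable (a) in
/-- the four basis elements at site p -/
def Bset (p : X) : Set A := {1, a p, star (a p), np a p}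

variable (a) in
/-- normal-form generators: basis element at `p` times an element away from `p`
of definite parity. -/
def Gset (p : X) (Q : Set A) : Set A :=
  {x | ∃ b ∈ Bset a p, ∃ c ∈ Q ∩ (Ev a p ∪ Od a p), x = b * c}

variable (hCAR₁ : ∀ i j, star (a i) * a j + a j * star (a i) = if i = j then (1 : A) else 0)
  (hCAR₂ : ∀ i j, a i * a j + a j * a i = 0)

include hCAR₁ hCAR₂

theorem np_comm_evod {p : X} {c : A} (hc : c ∈ Ev a p ∪ Od a p) :
    c * np a p = np a p * c := by
  symm
  rcases hc with hc | hc
  · calc np a p * c = star (a p) * (a p * c) := by rw [np, mul_assoc]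
    _ = (star (a p) * c) * a p := by rw [hc.1, mul_assoc]
    _ = c * (star (a p) * a p) := by rw [hc.2, mul_assoc]
    _ = c * np a p := rfl
  · calc np a p * c = star (a p) * (a p * c) := by rw [np, mul_assoc]
    _ = -((star (a p) * c) * a p) := by rw [hc.1, mul_neg, mul_assoc]
    _ = (c * star (a p)) * a p := by rw [hc.2, neg_mul, neg_neg]
    _ = c * np a p := by rw [mul_assoc]; rfl

theorem comm_or_anticomm_b {p : X} {b c : A} (hb : b ∈ Bset a p)
    (hc : c ∈ Ev a p ∪ Od a p) : c * b = b * c ∨ c * b = -(b * c) := by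
  simp only [Bset, Set.mem_insert_iff, Set.mem_singleton_iff] at hb
  rcases hb with rfl | rfl | rfl | rfl
  · left; rw [one_mul, mul_one]
  · rcases hc with hc | hc
    · left; exact hc.1.symm
    · right; rw [hc.1, neg_neg]
  · rcases hc with hc | hc
    · left; exact hc.2.symm
    · right; rw [hc.2, neg_neg]
  · left; exact np_comm_evod hCAR₁ hCAR₂ hc

theorem bmul {p : X} {b b' : A} (hb : b ∈ Bset a p) (hb' : b' ∈ Bset a p) :
    b * b' ∈ span ℂ (Bset a p) := by
  have m1 : (1:A) ∈ Bset a p := Or.inl rfl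
  have ma : a p ∈ Bset a p := Or.inr (Or.inl rfl)
  have ms : star (a p) ∈ Bset a p := Or.inr (Or.inr (Or.inl rfl))
  have mn : np a p ∈ Bset a p := Or.inr (Or.inr (Or.inr rfl))
  simp only [Bset, Set.mem_insert_iff, Set.mem_singleton_iff] at hb hb'
  rcases hb with rfl | rfl | rfl | rfl <;> rcases hb' with rfl | rfl | rfl | rfl
  · rw [one_mul]; exact subset_span m1
  · rw [one_mul]; exact subset_span ma
  · rw [one_mul]; exact subset_span ms
  · rw [one_mul]; exact subset_span mn
  · rw [mul_one]; exact subset_span ma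
  · rw [aa hCAR₁ hCAR₂]; exact zero_mem _
  · rw [a_mul_sa hCAR₁ hCAR₂]; exact sub_mem (subset_span m1) (subset_span mn)
  · rw [a_mul_np hCAR₁ hCAR₂]; exact subset_span ma
  · rw [mul_one]; exact subset_span ms
  · rw [show star (a p) * a p = np a p from rfl]; exact subset_span mn
  · rw [saa hCAR₁ hCAR₂]; exact zero_mem _
  · rw [sa_mul_np hCAR₁ hCAR₂]; exact zero_mem _
  · rw [mul_one]; exact subset_span mn
  · rw [np_mul_a hCAR₁ hCAR₂]; exact zero_mem _
  · rw [np_mul_sa hCAR₁ hCAR₂]; exact subset_span ms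
  · rw [np_idem hCAR₁ hCAR₂]; exact subset_span mn

end gset


section adjoinstuff
open StarAlgebra Submodule

theorem comm_star' {g z : A} (hg : star g = g ∨ star g = -g) (h : g * z = z * g) :
    g * star z = star z * g := by
  have h2 := congrArg star h
  rw [star_mul, star_mul] at h2
  rcases hg with hg | hg
  · rw [hg] at h2; exact h2.symm
  · rw [hg, neg_mul, mul_neg, neg_inj] at h2; exact h2.symm

theorem commute_adjoin {s : Set (Fin ν → ℤ)} {g : A} (hg : star g = g ∨ star g = -g)
    (h : ∀ q ∈ s, g * a q = a q * g) :
    ∀ z ∈ StarAlgebra.adjoin ℂ (a '' s), g * z = z * g := by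
  intro z hz
  induction hz using StarAlgebra.adjoin_induction with
  | mem x hx =>
      obtain ⟨q, hq, rfl⟩ := hx
      exact h q hq
  | algebraMap r => exact (Algebra.commutes r g).symm
  | add x y hx hy ihx ihy => rw [mul_add, add_mul, ihx, ihy]
  | mul x y hx hy ihx ihy => rw [← mul_assoc, ihx, mul_assoc, ihy, ← mul_assoc]
  | star x hx ih => exact comm_star' hg ih

theorem adjoin_mono' {s t : Set A} (h : s ⊆ t) :
    StarAlgebra.adjoin ℂ s ≤ StarAlgebra.adjoin ℂ t :=
  StarAlgebra.adjoin_le (h.trans (StarAlgebra.subset_adjoin ℂ t))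

theorem exists_finset_adjoin {s : Set (Fin ν → ℤ)} {z : A}
    (hz : z ∈ StarAlgebra.adjoin ℂ (a '' s)) :
    ∃ F : Finset (Fin ν → ℤ), ↑F ⊆ s ∧ z ∈ StarAlgebra.adjoin ℂ (a '' (F : Set (Fin ν → ℤ))) := by
  induction hz using StarAlgebra.adjoin_induction with
  | mem x hx =>
      obtain ⟨q, hq, rfl⟩ := hx
      refine ⟨{q}, by simpa using hq, StarAlgebra.subset_adjoin ℂ _ ⟨q, by simp⟩⟩
  | algebraMap r => exact ⟨∅, by simp, algebraMap_mem _ r⟩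
  | add x y hx hy ihx ihy =>
      obtain ⟨F₁, hF₁, hx1⟩ := ihx
      obtain ⟨F₂, hF₂, hx2⟩ := ihy
      refine ⟨F₁ ∪ F₂, by simp [hF₁, hF₂, Set.union_subset], ?_⟩
      have h1 : StarAlgebra.adjoin ℂ (a '' (F₁ : Set _)) ≤
          StarAlgebra.adjoin ℂ (a '' ((F₁ ∪ F₂ : Finset _) : Set _)) :=
        adjoin_mono' (Set.image_mono (by simp [Finset.coe_union]))
      have h2 : StarAlgebra.adjoin ℂ (a '' (F₂ : Set _)) ≤
          StarAlgebra.adjoin ℂ (a '' ((F₁ ∪ F₂ : Finset _) : Set _)) :=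
        adjoin_mono' (Set.image_mono (by simp [Finset.coe_union]))
      exact add_mem (h1 hx1) (h2 hx2)
  | mul x y hx hy ihx ihy =>
      obtain ⟨F₁, hF₁, hx1⟩ := ihx
      obtain ⟨F₂, hF₂, hx2⟩ := ihy
      refine ⟨F₁ ∪ F₂, by simp [hF₁, hF₂, Set.union_subset], ?_⟩
      have h1 : StarAlgebra.adjoin ℂ (a '' (F₁ : Set _)) ≤
          StarAlgebra.adjoin ℂ (a '' ((F₁ ∪ F₂ : Finset _) : Set _)) :=
        adjoin_mono' (Set.image_mono (by simp [Finset.coe_union]))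
      have h2 : StarAlgebra.adjoin ℂ (a '' (F₂ : Set _)) ≤
          StarAlgebra.adjoin ℂ (a '' ((F₁ ∪ F₂ : Finset _) : Set _)) :=
        adjoin_mono' (Set.image_mono (by simp [Finset.coe_union]))
      exact mul_mem (h1 hx1) (h2 hx2)
  | star x hx ih =>
      obtain ⟨F₁, hF₁, hx1⟩ := ih
      exact ⟨F₁, hF₁, star_mem hx1⟩

end adjoinstuff


section spanG
open StarAlgebra Submodule

variable (hCAR₁ : ∀ i j, star (a i) * a j + a j * star (a i) = if i = j then (1 : A) else 0)
  (hCAR₂ : ∀ i j, a i * a j + a j * a i = 0)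

include hCAR₁ hCAR₂

theorem aq_mem_Od {p q : X} (h : p ≠ q) : a q ∈ Od a p :=
  ⟨anti hCAR₁ hCAR₂ p q, santi hCAR₁ hCAR₂ h⟩

theorem star_Bset {p : X} {b : A} (hb : b ∈ Bset a p) : star b ∈ Bset a p := by
  simp only [Bset, Set.mem_insert_iff, Set.mem_singleton_iff] at hb ⊢
  rcases hb with rfl | rfl | rfl | rfl
  · left; exact star_one A
  · right; right; left; rfl
  · right; left; exact star_star _
  · right; right; right; exact np_sa hCAR₁ hCAR₂ p

omit hCAR₁ hCAR₂ in
theorem span_b_mul {p : X} {Q : Set A} {d c : A} (hd : d ∈ span ℂ (Bset a p))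
    (hc : c ∈ Q ∩ (Ev a p ∪ Od a p)) : d * c ∈ span ℂ (Gset a p Q) := by
  induction hd using Submodule.span_induction with
  | mem b hb => exact subset_span ⟨b, hb, c, hc, rfl⟩
  | zero => rw [zero_mul]; exact zero_mem _
  | add x y hx hy ihx ihy => rw [add_mul]; exact add_mem ihx ihy
  | smul r x hx ih => rw [smul_mul_assoc]; exact smul_mem _ r ih

theorem gmul {p : X} {Q : StarSubalgebra ℂ A} {x y : A}
    (hx : x ∈ Gset a p ↑Q) (hy : y ∈ Gset a p ↑Q) :
    x * y ∈ span ℂ (Gset a p (↑Q : Set A)) := by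
  obtain ⟨b, hb, c, hc, rfl⟩ := hx
  obtain ⟨b', hb', c', hc', rfl⟩ := hy
  have hcc' : c * c' ∈ (↑Q : Set A) ∩ (Ev a p ∪ Od a p) := by
    refine ⟨mul_mem hc.1 hc'.1, ?_⟩
    rcases hc.2 with h1 | h1 <;> rcases hc'.2 with h2 | h2
    · exact Or.inl (ev_mul_ev h1 h2)
    · exact Or.inr (ev_mul_od h1 h2)
    · exact Or.inr (od_mul_ev h1 h2)
    · exact Or.inl (od_mul_od h1 h2)
  rcases comm_or_anticomm_b hCAR₁ hCAR₂ hb' hc.2 with hcomm | hanti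
  · have : (b * c) * (b' * c') = (b * b') * (c * c') := by
      rw [mul_assoc, ← mul_assoc c, hcomm]
      simp only [mul_assoc]
    rw [this]
    exact span_b_mul (bmul hCAR₁ hCAR₂ hb hb') hcc'
  · have : (b * c) * (b' * c') = -((b * b') * (c * c')) := by
      rw [mul_assoc, ← mul_assoc c, hanti]
      simp only [neg_mul, mul_neg, mul_assoc]
    rw [this]
    exact neg_mem (span_b_mul (bmul hCAR₁ hCAR₂ hb hb') hcc')

theorem star_spanG {p : X} {Q : StarSubalgebra ℂ A} {z : A}
    (hz : z ∈ span ℂ (Gset a p (↑Q : Set A))) :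
    star z ∈ span ℂ (Gset a p (↑Q : Set A)) := by
  induction hz using Submodule.span_induction with
  | mem x hx =>
      obtain ⟨b, hb, c, hc, rfl⟩ := hx
      have hsb := star_Bset hCAR₁ hCAR₂ hb
      have hsc : star c ∈ (↑Q : Set A) ∩ (Ev a p ∪ Od a p) := by
        refine ⟨star_mem hc.1, ?_⟩
        rcases hc.2 with h1 | h1
        · exact Or.inl (star_Ev h1)
        · exact Or.inr (star_Od h1)
      rw [star_mul]
      rcases comm_or_anticomm_b hCAR₁ hCAR₂ hsb hsc.2 with hcomm | hanti
      · rw [hcomm]; exact subset_span ⟨star b, hsb, star c, hsc, rfl⟩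
      · rw [hanti]; exact neg_mem (subset_span ⟨star b, hsb, star c, hsc, rfl⟩)
  | zero => rw [star_zero]; exact zero_mem _
  | add x y hx hy ihx ihy => rw [star_add]; exact add_mem ihx ihy
  | smul r x hx ih => rw [star_smul]; exact smul_mem _ _ ih

theorem mem_spanG {F : Finset X} {p : X} {z : A}
    (hz : z ∈ StarAlgebra.adjoin ℂ (a '' (F : Set X))) :
    z ∈ span ℂ (Gset a p (↑(StarAlgebra.adjoin ℂ (a '' ((F.erase p : Finset X) : Set X))) : Set A)) := by
  set Q := StarAlgebra.adjoin ℂ (a '' ((F.erase p : Finset X) : Set X)) with hQ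
  have h1G : (1:A) ∈ Gset a p (↑Q : Set A) :=
    ⟨1, Or.inl rfl, 1, ⟨one_mem Q, Or.inl (one_mem_Ev p)⟩, (one_mul 1).symm⟩
  induction hz using StarAlgebra.adjoin_induction with
  | mem x hx =>
      obtain ⟨q, hq, rfl⟩ := hx
      by_cases hqp : q = p
      · subst hqp
        exact subset_span ⟨a q, Or.inr (Or.inl rfl), 1,
          ⟨one_mem Q, Or.inl (one_mem_Ev q)⟩, (mul_one _).symm⟩
      · refine subset_span ⟨1, Or.inl rfl, a q,
          ⟨?_, Or.inr (aq_mem_Od hCAR₁ hCAR₂ (fun h => hqp h.symm))⟩, (one_mul _).symm⟩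
        exact StarAlgebra.subset_adjoin ℂ _ ⟨q, by simp [Finset.mem_erase, hqp, hq], rfl⟩
  | algebraMap r =>
      rw [Algebra.algebraMap_eq_smul_one]
      exact smul_mem _ r (subset_span h1G)
  | add x y hx hy ihx ihy => exact add_mem ihx ihy
  | mul x y hx hy ihx ihy =>
      have hle : span ℂ (Gset a p (↑Q : Set A)) * span ℂ (Gset a p (↑Q : Set A)) ≤
          span ℂ (Gset a p (↑Q : Set A)) := by
        rw [span_mul_span]
        apply span_le.mpr
        rintro w ⟨x', hx', y', hy', rfl⟩
        exact gmul hCAR₁ hCAR₂ hx' hy'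
      exact hle (mul_mem_mul ihx ihy)
  | star x hx ih => exact star_spanG hCAR₁ hCAR₂ ih

end spanG


section key
open StarAlgebra Submodule

variable (hCAR₁ : ∀ i j, star (a i) * a j + a j * star (a i) = if i = j then (1 : A) else 0)
  (hCAR₂ : ∀ i j, a i * a j + a j * a i = 0)

include hCAR₁ hCAR₂

theorem vp_mul_np (p : X) : vp a p * np a p = -(np a p) := by
  rw [vp, sub_mul, one_mul, smul_mul_assoc, np_idem hCAR₁ hCAR₂, two_smul]
  abel

theorem np_mul_vp (p : X) : np a p * vp a p = -(np a p) := by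
  rw [vp, mul_sub, mul_one, mul_smul_comm, np_idem hCAR₁ hCAR₂, two_smul]
  abel

omit hCAR₁ hCAR₂ in
theorem phi_mul_right {g c b : A} (hc : g * c = c * g) (hcs : star g * c = c * star g) :
    phi g (b * c) = (phi g b) * c := by
  rw [phi_apply, phi_apply, smul_mul_assoc, add_mul]
  congr 2
  rw [← mul_assoc g b c, mul_assoc (g*b) c (star g), ← hcs, ← mul_assoc]

theorem phi_vp_one (p : X) : phi (vp a p) (1:A) = 1 :=
  phi_fix (by rw [mul_one, one_mul]) (by rw [vp_sa hCAR₁ hCAR₂]; exact vp_mul_vp hCAR₁ hCAR₂ p)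

theorem phi_uu_one {p r : X} (h : p ≠ r) : phi (up a p * up a r) (1:A) = 1 :=
  phi_fix (by rw [mul_one, one_mul])
    (by rw [uu_star hCAR₁ hCAR₂]; exact uu_mul_star hCAR₁ hCAR₂ p r)

theorem phi_vp_a (p : X) : phi (vp a p) (a p) = 0 := by
  rw [phi_apply, vp_sa hCAR₁ hCAR₂, vp_mul_a hCAR₁ hCAR₂, a_mul_vp hCAR₁ hCAR₂,
    add_neg_cancel, smul_zero]

theorem phi_vp_sa (p : X) : phi (vp a p) (star (a p)) = 0 := by
  rw [phi_apply, vp_sa hCAR₁ hCAR₂, vp_mul_sa hCAR₁ hCAR₂, neg_mul,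
    sa_mul_vp hCAR₁ hCAR₂, add_neg_cancel, smul_zero]

theorem phi_vp_np (p : X) : phi (vp a p) (np a p) = np a p := by
  rw [phi_apply, vp_sa hCAR₁ hCAR₂, vp_mul_np hCAR₁ hCAR₂, neg_mul,
    np_mul_vp hCAR₁ hCAR₂, neg_neg, ← two_smul ℂ (np a p), smul_smul]
  norm_num

theorem phi_uu_np {p r : X} (h : p ≠ r) :
    phi (up a p * up a r) (np a p) = (2:ℂ)⁻¹ • 1 := by
  rw [phi_apply, uu_star hCAR₁ hCAR₂, guu_np hCAR₁ hCAR₂ h]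
  congr 1
  abel

theorem key {F : Finset X} {p r : X} (hr : r ∉ F) (hrp : r ≠ p) {z : A}
    (hz : z ∈ StarAlgebra.adjoin ℂ (a '' (F : Set X))) :
    phi (up a p * up a r) (phi (vp a p) z) ∈
      StarAlgebra.adjoin ℂ (a '' ((F.erase p : Finset X) : Set X)) := by
  have hpr : p ≠ r := hrp.symm
  have hstar : star (up a p * up a r) = -(up a p * up a r) := by
    rw [uu_star hCAR₁ hCAR₂, up_anticomm hCAR₁ hCAR₂ hrp]
  by_cases hp : p ∈ F
  · set Q := StarAlgebra.adjoin ℂ (a '' ((F.erase p : Finset X) : Set X)) with hQdef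
    have hvQ : ∀ c ∈ Q, vp a p * c = c * vp a p := by
      apply commute_adjoin (Or.inl (vp_sa hCAR₁ hCAR₂ p))
      intro q hq
      have hqp : q ≠ p := (Finset.mem_erase.mp hq).1
      exact vp_comm_a hCAR₁ hCAR₂ hqp.symm
    have huQ : ∀ c ∈ Q, (up a p * up a r) * c = c * (up a p * up a r) := by
      apply commute_adjoin (Or.inr hstar)
      intro q hq
      have hqp : q ≠ p := (Finset.mem_erase.mp hq).1
      have hqr : q ≠ r := fun h => hr (h ▸ (Finset.mem_erase.mp hq).2)
      exact uu_comm_a hCAR₁ hCAR₂ hqp.symm hqr.symm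
    have hsuQ : ∀ c ∈ Q, star (up a p * up a r) * c = c * star (up a p * up a r) := by
      intro c hc
      rw [hstar, neg_mul, mul_neg, huQ c hc]
    have hz' := mem_spanG hCAR₁ hCAR₂ (p := p) hz
    rw [← hQdef] at hz'
    clear hz
    induction hz' using Submodule.span_induction with
    | mem w hw =>
        obtain ⟨b, hb, c, hc, rfl⟩ := hw
        have hc1 : c ∈ Q := hc.1
        rw [phi_mul_right (hvQ c hc1) (by rw [vp_sa hCAR₁ hCAR₂]; exact hvQ c hc1),
          phi_mul_right (huQ c hc1) (hsuQ c hc1)]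
        simp only [Bset, Set.mem_insert_iff, Set.mem_singleton_iff] at hb
        rcases hb with rfl | rfl | rfl | rfl
        · rw [phi_vp_one hCAR₁ hCAR₂, phi_uu_one hCAR₁ hCAR₂ hpr, one_mul]
          exact hc1
        · rw [phi_vp_a hCAR₁ hCAR₂, map_zero, zero_mul]
          exact zero_mem _
        · rw [phi_vp_sa hCAR₁ hCAR₂, map_zero, zero_mul]
          exact zero_mem _
        · rw [phi_vp_np hCAR₁ hCAR₂, phi_uu_np hCAR₁ hCAR₂ hpr, smul_mul_assoc, one_mul]
          exact SMulMemClass.smul_mem _ hc1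
    | zero => rw [map_zero, map_zero]; exact zero_mem _
    | add x y hx hy ihx ihy => rw [map_add, map_add]; exact add_mem ihx ihy
    | smul r' x hx ih => rw [map_smul, map_smul]; exact SMulMemClass.smul_mem r' ih
  · rw [Finset.erase_eq_of_notMem hp]
    have hvz : vp a p * z = z * vp a p := by
      refine commute_adjoin (Or.inl (vp_sa hCAR₁ hCAR₂ p)) ?_ z hz
      intro q hq
      exact vp_comm_a hCAR₁ hCAR₂ (fun h => hp (h ▸ hq))
    have huz : (up a p * up a r) * z = z * (up a p * up a r) := by
      refine commute_adjoin (Or.inr hstar) ?_ z hz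
      intro q hq
      have hqp : p ≠ q := fun h => hp (h ▸ hq)
      have hqr : r ≠ q := fun h => hr (h ▸ hq)
      exact uu_comm_a hCAR₁ hCAR₂ hqp hqr
    rw [phi_fix hvz (by rw [vp_sa hCAR₁ hCAR₂]; exact vp_mul_vp hCAR₁ hCAR₂ p),
      phi_fix huz (by rw [uu_star hCAR₁ hCAR₂]; exact uu_mul_star hCAR₁ hCAR₂ p r)]
    exact hz

end key


section assembly
open StarAlgebra Submodule

theorem carSub_mono {s t : Set (Fin ν → ℤ)} (h : s ⊆ t) : carSub a s ≤ carSub a t :=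
  StarSubalgebra.topologicalClosure_mono (adjoin_mono' (Set.image_mono h))

theorem approx_local {s : Set (Fin ν → ℤ)} {x : A} (hx : x ∈ carSub a s) {ε : ℝ} (hε : 0 < ε) :
    ∃ (G : Finset (Fin ν → ℤ)) (y : A), ↑G ⊆ s ∧
      y ∈ StarAlgebra.adjoin ℂ (a '' (G : Set (Fin ν → ℤ))) ∧ ‖x - y‖ < ε := by
  have hx' : x ∈ closure (↑(StarAlgebra.adjoin ℂ (a '' s)) : Set A) := by
    rw [← StarSubalgebra.topologicalClosure_coe]
    exact hx
  rw [Metric.mem_closure_iff] at hx'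
  obtain ⟨y, hy, hxy⟩ := hx' ε hε
  obtain ⟨G, hGs, hyG⟩ := exists_finset_adjoin hy
  rw [dist_eq_norm] at hxy
  exact ⟨G, y, hGs, hyG, hxy⟩

theorem infiniteX (hν : ν ≠ 0) : Infinite (Fin ν → ℤ) :=
  Infinite.of_injective (fun (z : ℤ) (_ : Fin ν) => z)
    (fun z w h => congrFun h ⟨0, Nat.pos_of_ne_zero hν⟩)

variable (hCAR₁ : ∀ i j, star (a i) * a j + a j * star (a i) = if i = j then (1 : A) else 0)
  (hCAR₂ : ∀ i j, a i * a j + a j * a i = 0)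

include hCAR₁ hCAR₂

theorem clear_sites [Infinite (Fin ν → ℤ)]
    {I : ℕ → Set (Fin ν → ℤ)} {x : A} (hx : ∀ n, x ∈ carSub a (I n))
    (T : Finset (Fin ν → ℤ)) (hT : ∀ t ∈ T, ∃ n, t ∉ I n) :
    ∀ (F : Finset (Fin ν → ℤ)) (y : A), y ∈ StarAlgebra.adjoin ℂ (a '' (F : Set (Fin ν → ℤ))) →
    ∀ ε : ℝ, 0 < ε →
    ∃ z ∈ StarAlgebra.adjoin ℂ (a '' ((F \ T : Finset (Fin ν → ℤ)) : Set (Fin ν → ℤ))),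
      ‖x - z‖ ≤ ‖x - y‖ + ε := by
  induction T using Finset.induction_on with
  | empty =>
      intro F y hy ε hε
      rw [Finset.sdiff_empty]
      exact ⟨y, hy, by linarith⟩
  | @insert t T' htT' ih =>
      intro F y hy ε hε
      obtain ⟨z', hz', hz'n⟩ := ih (fun u hu => hT u (Finset.mem_insert_of_mem hu)) F y hy
        (ε/2) (by positivity)
      obtain ⟨n, hn⟩ := hT t (Finset.mem_insert_self t T')
      obtain ⟨G, x', hG, hx'adj, hx'n⟩ := approx_local (hx n) (ε := ε/8) (by positivity)
      obtain ⟨r, hr⟩ := Infinite.exists_notMem_finset ((F \ T') ∪ G ∪ {t})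
      have hrF : r ∉ F \ T' := fun h => hr (by simp [h])
      have hrG : r ∉ G := fun h => hr (by simp [h])
      have hrt : r ≠ t := fun h => hr (by simp [h])
      have htG : t ∉ G := fun h => hn (hG h)
      set g := up a t * up a r with hgdef
      have hstar : star g = -g := by
        rw [hgdef, uu_star hCAR₁ hCAR₂, up_anticomm hCAR₁ hCAR₂ hrt]
      set w := phi g (phi (vp a t) z') with hwdef
      have hw : w ∈ StarAlgebra.adjoin ℂ
          (a '' (((F \ T').erase t : Finset (Fin ν → ℤ)) : Set (Fin ν → ℤ))) :=
        key hCAR₁ hCAR₂ hrF hrt hz'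
      rw [← Finset.sdiff_insert] at hw
      refine ⟨w, hw, ?_⟩
      -- phi's fix x'
      have hvx : vp a t * x' = x' * vp a t := by
        refine commute_adjoin (Or.inl (vp_sa hCAR₁ hCAR₂ t)) ?_ x' hx'adj
        intro q hq
        exact vp_comm_a hCAR₁ hCAR₂ (fun h => htG (h ▸ hq))
      have hux : g * x' = x' * g := by
        refine commute_adjoin (Or.inr hstar) ?_ x' hx'adj
        intro q hq
        exact uu_comm_a hCAR₁ hCAR₂ (fun h => htG (h ▸ hq)) (fun h => hrG (h ▸ hq))
      have hfix : phi g (phi (vp a t) x') = x' := by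
        rw [phi_fix hvx (by rw [vp_sa hCAR₁ hCAR₂]; exact vp_mul_vp hCAR₁ hCAR₂ t),
          phi_fix hux (by rw [hgdef, uu_star hCAR₁ hCAR₂]; exact uu_mul_star hCAR₁ hCAR₂ t r)]
      -- contraction
      have hnv : ‖vp a t‖ ≤ 1 := norm_le_one_of_unit
        (by rw [vp_sa hCAR₁ hCAR₂]; exact vp_mul_vp hCAR₁ hCAR₂ t)
      have hng : ‖g‖ ≤ 1 := norm_le_one_of_unit
        (by rw [hgdef, uu_star hCAR₁ hCAR₂]; exact star_uu_mul hCAR₁ hCAR₂ t r)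
      have hcontr : ‖x' - w‖ ≤ ‖x' - z'‖ := by
        have h1 : x' - w = phi g (phi (vp a t) (x' - z')) := by
          rw [map_sub, map_sub, hwdef, hfix]
        rw [h1]
        exact (phi_norm_le hng _).trans (phi_norm_le hnv _)
      have e1 : ‖x - w‖ ≤ ‖x - x'‖ + ‖x' - w‖ := by
        have := norm_add_le (x - x') (x' - w)
        rwa [sub_add_sub_cancel] at this
      have e2 : ‖x' - z'‖ ≤ ‖x' - x‖ + ‖x - z'‖ := by
        have := norm_add_le (x' - x) (x - z')
        rwa [sub_add_sub_cancel] at this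
      have e3 : ‖x' - x‖ = ‖x - x'‖ := norm_sub_rev _ _
      calc ‖x - w‖ ≤ ‖x - x'‖ + ‖x' - w‖ := e1
      _ ≤ ‖x - x'‖ + (‖x' - x‖ + ‖x - z'‖) := by linarith [hcontr.trans e2]
      _ ≤ ε/8 + (ε/8 + (‖x - y‖ + ε/2)) := by rw [e3]; linarith
      _ ≤ ‖x - y‖ + ε := by linarith

end assembly

end CARHelper

/-- In the CAR algebra `A` over `ℤ^ν`, for any countable family `{I_n}` of
subsets of `ℤ^ν`, the intersection of subalgebras equals the subalgebra of the intersection: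
`⋂_n A(I_n) = A(⋂_n I_n)`. -/
theorem car_subalgebra_of_intersection
    {ν : ℕ} {A : Type*} [CStarAlgebra A]
    (a : (Fin ν → ℤ) → A)
    (hCAR₁ : ∀ i j, star (a i) * a j + a j * star (a i) = if i = j then (1 : A) else 0)
    (hCAR₂ : ∀ i j, a i * a j + a j * a i = 0)
    (hgen : carSub a Set.univ = ⊤)
    (I : ℕ → Set (Fin ν → ℤ)) :
    (⋂ n, (carSub a (I n) : Set A)) = (carSub a (⋂ n, I n) : Set A) := by
  classical
  apply Set.Subset.antisymm
  · intro x hx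
    simp only [Set.mem_iInter, SetLike.mem_coe] at hx
    rw [SetLike.mem_coe]
    by_cases hν : ν = 0
    · -- the one-point lattice: every region is ∅ or univ
      subst hν
      haveI : Subsingleton (Fin 0 → ℤ) := ⟨fun f g => funext fun i => absurd i.2 (by omega)⟩
      by_cases hall : ∀ n, I n = Set.univ
      · have hJ : (⋂ n, I n) = Set.univ := Set.iInter_eq_univ.mpr hall
        rw [hJ]
        have := hx 0
        rwa [hall 0] at this
      · push_neg at hall
        obtain ⟨m, hm⟩ := hall
        have hIm : I m = ∅ := by
          rcases Set.eq_empty_or_nonempty (I m) with h | h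
          · exact h
          · refine absurd (Set.eq_univ_iff_forall.mpr fun u => ?_) hm
            obtain ⟨v, hv⟩ := h
            rwa [Subsingleton.elim u v]
        have hJ : (⋂ n, I n) = ∅ := by
          apply Set.subset_empty_iff.mp
          intro u hu
          rw [← hIm]
          exact Set.mem_iInter.mp hu m
        rw [hJ]
        have := hx m
        rwa [hIm] at this
    · haveI : Infinite (Fin ν → ℤ) := CARHelper.infiniteX hν
      -- x lies in the closure of the algebraic part of `A(⋂ Iₙ)`
      have hxu : x ∈ carSub a Set.univ := by rw [hgen]; trivial
      have hcl : x ∈ closure (↑(StarAlgebra.adjoin ℂ (a '' (⋂ n, I n))) : Set A) := by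
        rw [Metric.mem_closure_iff]
        intro ε hε
        obtain ⟨F₀, y, -, hyadj, hyn⟩ := CARHelper.approx_local hxu (ε := ε/2) (by positivity)
        set T : Finset (Fin ν → ℤ) := F₀.filter (fun t => t ∉ (⋂ n, I n)) with hTdef
        have hT : ∀ t ∈ T, ∃ n, t ∉ I n := by
          intro t ht
          have h2 := (Finset.mem_filter.mp ht).2
          simpa [Set.mem_iInter] using h2
        obtain ⟨z, hzadj, hzn⟩ := CARHelper.clear_sites hCAR₁ hCAR₂ (fun n => hx n) T hT F₀ y
          hyadj (ε/4) (by positivity)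
        refine ⟨z, ?_, ?_⟩
        · refine CARHelper.adjoin_mono' (Set.image_mono ?_) hzadj
          intro u hu
          have h1 := Finset.mem_sdiff.mp hu
          by_contra hmem
          exact h1.2 (Finset.mem_filter.mpr ⟨h1.1, hmem⟩)
        · rw [dist_eq_norm]
          calc ‖x - z‖ ≤ ‖x - y‖ + ε/4 := hzn
          _ < ε/2 + ε/4 := by linarith
          _ < ε := by linarith
      rw [carSub]
      rw [← StarSubalgebra.topologicalClosure_coe] at hcl
      exact hcl
  · intro x hx
    rw [SetLike.mem_coe] at hx
    rw [Set.mem_iInter]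
    intro n
    rw [SetLike.mem_coe]
    exact CARHelper.carSub_mono (Set.iInter_subset I n) hx
end

section
/- An element x of the CAR algebra A over Z^ν is even (Θ(x) = x) if and only if it is asymptotically central under lattice translations: lim_{k→∞} ‖[τ_k(x), y]‖ = 0 for all y ∈ A. Consequently, any automorphism α of A commuting with all lattice translations τ_k (k ∈ Z^ν) commutes with the parity automorphism Θ. -/
open Filter Topology StarAlgebra

noncomputable section

namespace CAR

theorem eq_zero_of_eq_neg {M : Type*} [AddCommGroup M] [Module ℂ M] {x : M} (h : x = -x) :
    x = 0 :=
  (smul_eq_zero_iff_right (two_ne_zero' ℂ)).mp <| by rwa [two_smul, add_eq_zero_iff_eq_neg]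

theorem add_star_mem_unitary {A : Type*} [Ring A] [StarRing A] {b : A} (hbb : b * b = 0)
    (h : star b * b + b * star b = 1) : b + star b ∈ unitary A := by
  have hsq : (b + star b) * (b + star b) = 1 := by
    calc (b + star b) * (b + star b) = b * b + star (b * b) + (star b * b + b * star b) := by
          rw [star_mul]; noncomm_ring
      _ = 1 := by rw [hbb, star_zero, h, zero_add, zero_add]
  have hself : star (b + star b) = b + star b := by rw [star_add, star_star, add_comm]
  rw [Unitary.mem_iff, hself]
  exact ⟨hsq, hsq⟩

section Parity

variable {A : Type*} [Ring A] [StarRing A] [Algebra ℂ A] (Θ : A ≃⋆ₐ[ℂ] A)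

def evenPart (x : A) : A := (2 : ℂ)⁻¹ • (x + Θ x)

def oddPart (x : A) : A := (2 : ℂ)⁻¹ • (x - Θ x)

variable {Θ}

theorem evenPart_add_oddPart (x : A) : evenPart Θ x + oddPart Θ x = x := by
  rw [evenPart, oddPart, ← smul_add, add_add_sub_cancel, ← two_smul ℂ, smul_smul,
    inv_mul_cancel₀ two_ne_zero, one_smul]

theorem map_evenPart (hΘ : Function.Involutive Θ) (x : A) : Θ (evenPart Θ x) = evenPart Θ x := by
  rw [evenPart, map_smul, map_add, hΘ, add_comm]

theorem map_oddPart (hΘ : Function.Involutive Θ) (x : A) : Θ (oddPart Θ x) = -oddPart Θ x := by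
  rw [oddPart, map_smul, map_sub, hΘ, ← smul_neg, neg_sub]

theorem evenPart_of_map_eq {x : A} (hx : Θ x = x) : evenPart Θ x = x := by
  rw [evenPart, hx, ← two_smul ℂ, smul_smul, inv_mul_cancel₀ two_ne_zero, one_smul]

theorem oddPart_of_map_eq_neg {x : A} (hx : Θ x = -x) : oddPart Θ x = x := by
  rw [oddPart, hx, sub_neg_eq_add, ← two_smul ℂ, smul_smul, inv_mul_cancel₀ two_ne_zero,
    one_smul]

theorem oddPart_eq_zero_iff {x : A} : oddPart Θ x = 0 ↔ Θ x = x := by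
  rw [oddPart, smul_eq_zero_iff_right (inv_ne_zero two_ne_zero), sub_eq_zero, eq_comm]

end Parity

section Local

variable {ι A : Type*} [Ring A] [StarRing A] [Algebra ℂ A] [StarModule ℂ A]
  {a : ι → A} {Θ : A ≃⋆ₐ[ℂ] A} {F G : Set ι} {x y : A}

theorem map_mem_adjoin (τ : A ≃⋆ₐ[ℂ] A) (hτ : ∀ i ∈ F, τ (a i) ∈ adjoin ℂ (a '' G))
    (hx : x ∈ adjoin ℂ (a '' F)) : τ x ∈ adjoin ℂ (a '' G) :=
  adjoin_le (S := (adjoin ℂ (a '' G)).comap (τ : A →⋆ₐ[ℂ] A))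
    (by rintro _ ⟨i, hi, rfl⟩; exact hτ i hi) hx

theorem parity_mem_adjoin (hΘ : ∀ i, Θ (a i) = -a i) (hx : x ∈ adjoin ℂ (a '' F)) :
    Θ x ∈ adjoin ℂ (a '' F) :=
  map_mem_adjoin Θ (fun i hi => hΘ i ▸ neg_mem (subset_adjoin ℂ _ ⟨i, hi, rfl⟩)) hx

theorem translate_mem_adjoin [Add ι] {T : ι → A ≃⋆ₐ[ℂ] A} (hT : ∀ k i, T k (a i) = a (i + k))
    (k : ι) (hx : x ∈ adjoin ℂ (a '' F)) : T k x ∈ adjoin ℂ (a '' ((· + k) '' F)) :=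
  map_mem_adjoin (T k) (fun i hi => hT k i ▸ subset_adjoin ℂ _ ⟨i + k, ⟨i, hi, rfl⟩, rfl⟩) hx

variable (hanti : ∀ i j, i ≠ j → a i * a j = -(a j * a i))
  (hanti_star : ∀ i j, i ≠ j → star (a i) * a j = -(a j * star (a i)))
  (hΘ : ∀ i, Θ (a i) = -a i) (hΘΘ : Function.Involutive Θ)
include hanti hanti_star hΘ hΘΘ

theorem mul_eq_map_mul_of_notMem {j : ι} (hj : j ∉ F) (hx : x ∈ adjoin ℂ (a '' F)) :
    a j * x = Θ x * a j ∧ star (a j) * x = Θ x * star (a j) := by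
  induction hx using adjoin_induction with
  | mem _ hz =>
    obtain ⟨i, hi, rfl⟩ := hz
    have hji : j ≠ i := fun h => hj (h ▸ hi)
    rw [hΘ, neg_mul, neg_mul]
    exact ⟨hanti j i hji, hanti_star j i hji⟩
  | algebraMap r => simp only [AlgEquivClass.commutes, Algebra.commutes, and_self]
  | add p q _ _ hp hq => simp only [map_add, mul_add, add_mul, hp.1, hp.2, hq.1, hq.2, and_self]
  | mul p q _ _ hp hq =>
    simp only [map_mul, ← mul_assoc, hp.1, hp.2]
    simp only [mul_assoc, hq.1, hq.2, and_self]
  | star p _ hp =>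
    have h₁ := congrArg Θ hp.1
    have h₂ := congrArg Θ hp.2
    simp only [map_mul, map_star, hΘ, hΘΘ _, star_neg, neg_mul, mul_neg, neg_inj] at h₁ h₂
    constructor
    · simpa only [star_mul, star_star, map_star] using (congrArg star h₂).symm
    · simpa only [star_mul, star_star, map_star] using (congrArg star h₁).symm

theorem commute_of_disjoint_of_map_eq (hFG : Disjoint F G) (hx : x ∈ adjoin ℂ (a '' F))
    (hxe : Θ x = x) (hy : y ∈ adjoin ℂ (a '' G)) : Commute x y := by
  have hle : adjoin ℂ (a '' G) ≤ StarSubalgebra.centralizer ℂ {x} := by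
    refine adjoin_le ?_
    rintro _ ⟨j, hj, rfl⟩
    have hjF : j ∉ F := hFG.notMem_of_mem_right hj
    simp only [SetLike.mem_coe, StarSubalgebra.mem_centralizer_iff, Set.mem_singleton_iff,
      forall_eq]
    have hsx : Θ (star x) = star x := by rw [map_star, hxe]
    rw [(mul_eq_map_mul_of_notMem hanti hanti_star hΘ hΘΘ hjF hx).1, hxe,
      (mul_eq_map_mul_of_notMem hanti hanti_star hΘ hΘΘ hjF (star_mem hx)).1, hsx]
    exact ⟨rfl, rfl⟩
  exact ((StarSubalgebra.mem_centralizer_iff ℂ).mp (hle hy) x rfl).1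

theorem mul_eq_mul_map_of_disjoint_of_map_eq_neg (hFG : Disjoint F G)
    (hx : x ∈ adjoin ℂ (a '' F)) (hxo : Θ x = -x) (hy : y ∈ adjoin ℂ (a '' G)) :
    y * x = x * Θ y := by
  induction hy using adjoin_induction generalizing x with
  | mem _ hz =>
    obtain ⟨j, hj, rfl⟩ := hz
    rw [(mul_eq_map_mul_of_notMem hanti hanti_star hΘ hΘΘ (hFG.notMem_of_mem_right hj) hx).1,
      hxo, hΘ, neg_mul, mul_neg]
  | algebraMap r => rw [AlgEquivClass.commutes, Algebra.commutes]
  | add p q _ _ hp hq => rw [map_add, add_mul, mul_add, hp hx hxo, hq hx hxo]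
  | mul p q _ _ hp hq => rw [map_mul, mul_assoc, hq hx hxo, ← mul_assoc, hp hx hxo, mul_assoc]
  | star p _ hp =>
    have h := congrArg Θ (hp (star_mem hx) (by rw [map_star, hxo, star_neg]))
    rw [map_mul, map_mul, hΘΘ, map_star, hxo, star_neg, mul_neg, neg_mul, neg_inj] at h
    simpa only [star_mul, star_star, map_star] using (congrArg star h).symm

end Local

section Automorphism

variable {ι A : Type*} [Ring A] [StarRing A] [Algebra ℂ A] {Θ β : A ≃⋆ₐ[ℂ] A}
  {T : ι → A ≃⋆ₐ[ℂ] A}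

theorem eq_parity_of_fixes_even (hΘΘ : Function.Involutive Θ)
    (hΘT : ∀ k x, Θ (T k x) = T k (Θ x))
    (hinv : ∀ z, Θ z = -z → (∀ k, T k z = z) → z = 0)
    (hβT : ∀ k x, β (T k x) = T k (β x)) (hβ : ∀ x, Θ x = x → β x = x)
    {u : A} (hu : u ∈ unitary A) (huo : Θ u = -u) {v : A} (hv : v ∈ unitary A)
    (hvo : β v = -v) : β = Θ := by
  -- On odd elements `β` is right multiplication by the translation-invariant element `c`.
  set c := star u * β u
  have hodd : ∀ p, Θ p = -p → β p = p * c := fun p hp => by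
    have hpu : β (p * star u) = p * star u :=
      hβ _ (by rw [map_mul, map_star, hp, huo, star_neg, neg_mul_neg])
    calc β p = β (p * star u * u) := by rw [mul_assoc, Unitary.star_mul_self_of_mem hu, mul_one]
      _ = p * c := by rw [map_mul, hpu, mul_assoc]
  have hTc : ∀ k, T k c = c := fun k => by
    have hTu : Θ (T k u) = -T k u := by rw [hΘT, huo, map_neg]
    rw [map_mul, ← hβT, hodd _ hTu, ← mul_assoc, map_star, ← map_star, ← map_mul,
      Unitary.star_mul_self_of_mem hu, map_one, one_mul]
  have hc : Θ c = c := oddPart_eq_zero_iff.mp <| hinv _ (map_oddPart hΘΘ c) fun k => by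
    rw [oddPart, map_smul, map_sub, hTc, ← hΘT, hTc]
  have hβx : ∀ x, β x = evenPart Θ x + oddPart Θ x * c := fun x => by
    conv_lhs => rw [← evenPart_add_oddPart (Θ := Θ) x]
    rw [map_add, hβ _ (map_evenPart hΘΘ x), hodd _ (map_oddPart hΘΘ x)]
  have hβΘ : ∀ x, β (Θ x) = Θ (β x) := fun x => by
    conv_lhs => rw [← evenPart_add_oddPart (Θ := Θ) x]
    rw [map_add, map_evenPart hΘΘ, map_oddPart hΘΘ, map_add, map_neg,
      hβ _ (map_evenPart hΘΘ x), hodd _ (map_oddPart hΘΘ x), hβx, map_add, map_mul,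
      map_evenPart hΘΘ, map_oddPart hΘΘ, hc, neg_mul]
  -- `v + Θ v` is even, so fixed by `β`, but also reversed by `β`.
  have hvodd : Θ v = -v := by
    refine eq_neg_of_add_eq_zero_right (eq_zero_of_eq_neg ?_)
    calc v + Θ v = β (v + Θ v) := (hβ _ (by rw [map_add, hΘΘ, add_comm])).symm
      _ = -(v + Θ v) := by rw [map_add, hβΘ, hvo, map_neg, neg_add]
  have hc1 : c = -1 := by
    rw [← one_mul c, ← Unitary.star_mul_self_of_mem hv, mul_assoc, ← hodd v hvodd, hvo,
      mul_neg, Unitary.star_mul_self_of_mem hv]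
  ext x
  rw [hβx, hc1, mul_neg_one, ← sub_eq_add_neg]
  conv_rhs => rw [← evenPart_add_oddPart (Θ := Θ) x]
  rw [map_add, map_evenPart hΘΘ, map_oddPart hΘΘ, sub_eq_add_neg]

end Automorphism

section Asymptotic

variable {ι A : Type*} [CStarAlgebra A]

theorem norm_mul_sub_mul_map_le (σ : A ≃⋆ₐ[ℂ] A) (y c : A) :
    ‖y * c - c * σ y‖ ≤ 2 * ‖c‖ * ‖y‖ :=
  calc ‖y * c - c * σ y‖ ≤ ‖y‖ * ‖c‖ + ‖c‖ * ‖σ y‖ :=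
        (norm_sub_le _ _).trans (add_le_add (norm_mul_le _ _) (norm_mul_le _ _))
    _ = 2 * ‖c‖ * ‖y‖ := by rw [StarAlgEquiv.norm_map]; ring

theorem lipschitzWith_mul_sub_mul_map (σ : A ≃⋆ₐ[ℂ] A) (c : A) :
    LipschitzWith (2 * ‖c‖₊) fun y => y * c - c * σ y :=
  LipschitzWith.of_dist_le_mul fun y y' => by
    simpa only [dist_eq_norm, map_sub, sub_mul, mul_sub, NNReal.coe_mul, NNReal.coe_ofNat,
      coe_nnnorm, sub_sub_sub_comm] using norm_mul_sub_mul_map_le σ (y - y') c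

theorem lipschitzWith_mul_map_sub_map_mul (σ τ : A ≃⋆ₐ[ℂ] A) (y : A) :
    LipschitzWith (2 * ‖y‖₊) fun c => y * τ c - τ c * σ y :=
  LipschitzWith.of_dist_le_mul fun c c' => by
    have h := norm_mul_sub_mul_map_le σ y (τ (c - c'))
    rw [StarAlgEquiv.norm_map, mul_right_comm] at h
    simpa only [dist_eq_norm, map_sub, sub_mul, mul_sub, NNReal.coe_mul, NNReal.coe_ofNat,
      coe_nnnorm, sub_sub_sub_comm] using h

theorem isClosed_setOf_tendsto_zero {X E : Type*} [PseudoMetricSpace X]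
    [SeminormedAddCommGroup E] {l : Filter ι} {f : ι → X → E} {K : NNReal}
    (hf : ∀ k, LipschitzWith K (f k)) : IsClosed {x | Tendsto (f · x) l (𝓝 0)} :=
  (LipschitzWith.uniformEquicontinuous f K hf).equicontinuous.isClosed_setOfPred_tendsto
    continuous_const

theorem tendsto_mul_sub_mul_map_of_dense {l : Filter ι} (T : ι → A ≃⋆ₐ[ℂ] A)
    (σ : A ≃⋆ₐ[ℂ] A) {L : Set A} (hL : Dense L) {P : A → A} (hP : Continuous P)
    (hPL : ∀ s ∈ L, ∀ y ∈ L, ∀ᶠ k in l, y * T k (P s) = T k (P s) * σ y) (x y : A) :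
    Tendsto (fun k => y * T k (P x) - T k (P x) * σ y) l (𝓝 0) := by
  -- Both limits pass to closures: the twisted commutators are uniformly Lipschitz in each variable.
  have hlocal : ∀ s ∈ L, ∀ y, Tendsto (fun k => y * T k (P s) - T k (P s) * σ y) l (𝓝 0) := by
    intro s hs
    refine hL.induction (fun y hy => ?_) (isClosed_setOf_tendsto_zero (K := 2 * ‖P s‖₊) fun k => ?_)
    · exact tendsto_const_nhds.congr' ((hPL s hs y hy).mono fun k hk => (sub_eq_zero.2 hk).symm)
    · simpa only [StarAlgEquiv.nnnorm_map] using lipschitzWith_mul_sub_mul_map σ (T k (P s))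
  have hclosed := isClosed_setOf_tendsto_zero (l := l) fun k =>
    lipschitzWith_mul_map_sub_map_mul σ (T k) y
  exact hclosed.closure_subset_iff.2 (by rintro _ ⟨s, hs, rfl⟩; exact hlocal s hs y)
    (map_mem_closure hP (hL x) (Set.mapsTo_image P L))

end Asymptotic

section Lattice

variable {ι A : Type*} [CStarAlgebra A]

theorem continuous_evenPart (Θ : A ≃⋆ₐ[ℂ] A) : Continuous (evenPart Θ) :=
  continuous_const.smul (continuous_id.add (StarAlgEquiv.isometry Θ).continuous)

theorem continuous_oddPart (Θ : A ≃⋆ₐ[ℂ] A) : Continuous (oddPart Θ) :=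
  continuous_const.smul (continuous_id.sub (StarAlgEquiv.isometry Θ).continuous)

theorem dense_iUnion_adjoin_finset {a : ι → A}
    (hgen : (adjoin ℂ (a '' Set.univ)).topologicalClosure = ⊤) :
    Dense (⋃ F : Finset ι, (adjoin ℂ (a '' F) : Set A)) := by
  have hunion :
      (adjoin ℂ (a '' Set.univ) : Set A) = ⋃ F : Finset ι, (adjoin ℂ (a '' F) : Set A) := by
    rw [← StarSubalgebra.coe_iSup_of_directed (Monotone.directed_le fun F G h =>
      adjoin_mono (Set.image_mono (Finset.coe_subset.2 h))), ← StarAlgebra.gc.l_iSup]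
    congr 2
    ext
    simp only [Set.image_univ, Set.mem_range, Set.iSup_eq_iUnion, Set.mem_iUnion, Set.mem_image,
      Finset.mem_coe]
    exact ⟨fun ⟨y, h⟩ => ⟨{y}, y, Finset.mem_singleton_self y, h⟩, fun ⟨_, y, _, h⟩ => ⟨y, h⟩⟩
  rw [dense_iff_closure_eq, ← hunion, ← StarSubalgebra.topologicalClosure_coe, hgen]
  rfl

theorem starAlgEquiv_ext_of_dense_adjoin {a : ι → A}
    (hgen : (adjoin ℂ (a '' Set.univ)).topologicalClosure = ⊤) {φ ψ : A ≃⋆ₐ[ℂ] A}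
    (h : ∀ i, φ (a i) = ψ (a i)) : φ = ψ := by
  have hle : (adjoin ℂ (a '' Set.univ)).topologicalClosure ≤
      StarAlgHom.equalizer (φ : A →⋆ₐ[ℂ] A) ψ :=
    StarSubalgebra.topologicalClosure_minimal
      (StarAlgHom.adjoin_le_equalizer _ _ (by rintro _ ⟨i, -, rfl⟩; exact h i))
      (isClosed_eq (StarAlgEquiv.isometry φ).continuous (StarAlgEquiv.isometry ψ).continuous)
  ext x
  exact hle (hgen ▸ trivial)

theorem eventually_disjoint_image_add [AddGroup ι] (F G : Finset ι) :
    ∀ᶠ k in cofinite, Disjoint ((· + k) '' (F : Set ι)) G := by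
  rw [eventually_cofinite]
  refine ((F.finite_toSet.prod G.finite_toSet).image fun p => -p.1 + p.2).subset fun k hk => ?_
  obtain ⟨_, ⟨i, hi, rfl⟩, hg⟩ := Set.not_disjoint_iff.mp hk
  exact ⟨(i, i + k), ⟨hi, hg⟩, neg_add_cancel_left i k⟩

structure IsFermionLattice [AddGroup ι] (a : ι → A) (Θ : A ≃⋆ₐ[ℂ] A) (T : ι → A ≃⋆ₐ[ℂ] A) :
    Prop where
  mul_anticomm : ∀ i j, i ≠ j → a i * a j = -(a j * a i)
  star_mul_anticomm : ∀ i j, i ≠ j → star (a i) * a j = -(a j * star (a i))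
  parity_apply : ∀ i, Θ (a i) = -a i
  parity_involutive : Function.Involutive Θ
  translate_apply : ∀ k i, T k (a i) = a (i + k)
  parity_translate : ∀ k x, Θ (T k x) = T k (Θ x)
  dense_local : Dense (⋃ F : Finset ι, (adjoin ℂ (a '' F) : Set A))

def IsAsymptoticallyCentral (T : ι → A ≃⋆ₐ[ℂ] A) (x : A) : Prop :=
  ∀ y, Tendsto (fun k => T k x * y - y * T k x) cofinite (𝓝 0)

theorem IsAsymptoticallyCentral.map {T : ι → A ≃⋆ₐ[ℂ] A} {x : A}
    (hx : IsAsymptoticallyCentral T x) (α : A ≃⋆ₐ[ℂ] A) (hα : ∀ k x, α (T k x) = T k (α x)) :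
    IsAsymptoticallyCentral T (α x) := fun y => by
  have h := ((StarAlgEquiv.isometry α).continuous.tendsto 0).comp (hx (α.symm y))
  rw [map_zero] at h
  refine h.congr fun k => ?_
  simp only [Function.comp_apply, map_sub, map_mul, hα, StarAlgEquiv.apply_symm_apply]

namespace IsFermionLattice

variable [AddGroup ι] {a : ι → A} {Θ : A ≃⋆ₐ[ℂ] A} {T : ι → A ≃⋆ₐ[ℂ] A}
  (S : IsFermionLattice a Θ T)
include S

theorem tendsto_mul_sub_mul_of_map_eq {x : A} (hx : Θ x = x) (y : A) :
    Tendsto (fun k => y * T k x - T k x * y) cofinite (𝓝 0) := by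
  rw [← evenPart_of_map_eq hx]
  refine tendsto_mul_sub_mul_map_of_dense T (StarAlgEquiv.refl ℂ A) S.dense_local
    (continuous_evenPart Θ) ?_ x y
  simp only [Set.mem_iUnion, SetLike.mem_coe]
  rintro s ⟨F, hs⟩ y ⟨G, hy⟩
  filter_upwards [eventually_disjoint_image_add F G] with k hk
  have hs' : evenPart Θ s ∈ adjoin ℂ (a '' F) :=
    SMulMemClass.smul_mem _ (add_mem hs (parity_mem_adjoin S.parity_apply hs))
  exact (commute_of_disjoint_of_map_eq S.mul_anticomm S.star_mul_anticomm S.parity_apply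
    S.parity_involutive hk (translate_mem_adjoin S.translate_apply k hs')
    (by rw [S.parity_translate, map_evenPart S.parity_involutive]) hy).eq.symm

theorem tendsto_mul_sub_mul_map_of_map_eq_neg {x : A} (hx : Θ x = -x) (y : A) :
    Tendsto (fun k => y * T k x - T k x * Θ y) cofinite (𝓝 0) := by
  rw [← oddPart_of_map_eq_neg hx]
  refine tendsto_mul_sub_mul_map_of_dense T Θ S.dense_local (continuous_oddPart Θ) ?_ x y
  simp only [Set.mem_iUnion, SetLike.mem_coe]
  rintro s ⟨F, hs⟩ y ⟨G, hy⟩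
  filter_upwards [eventually_disjoint_image_add F G] with k hk
  have hs' : oddPart Θ s ∈ adjoin ℂ (a '' F) :=
    SMulMemClass.smul_mem _ (sub_mem hs (parity_mem_adjoin S.parity_apply hs))
  exact mul_eq_mul_map_of_disjoint_of_map_eq_neg S.mul_anticomm S.star_mul_anticomm
    S.parity_apply S.parity_involutive hk (translate_mem_adjoin S.translate_apply k hs')
    (by rw [S.parity_translate, map_oddPart S.parity_involutive, map_neg]) hy

theorem isAsymptoticallyCentral_of_map_eq {x : A} (hx : Θ x = x) :
    IsAsymptoticallyCentral T x := fun y => by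
  simpa only [neg_sub, neg_zero] using (S.tendsto_mul_sub_mul_of_map_eq hx y).neg

variable [Infinite ι]

theorem eq_zero_of_map_eq_neg_of_forall_translate_eq {z : A} (hz : Θ z = -z)
    (hinv : ∀ k, T k z = z) : z = 0 := by
  have hconst : ∀ y, y * z - z * Θ y = 0 := fun y => tendsto_const_nhds_iff.mp <|
    (S.tendsto_mul_sub_mul_map_of_map_eq_neg hz y).congr fun k => by rw [hinv]
  have hzz : z * z = 0 := eq_zero_of_eq_neg <| by
    simpa only [hz, mul_neg, sub_neg_eq_add, add_eq_zero_iff_eq_neg] using hconst z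
  have hanti : z * star z = -(star z * z) := by
    simpa only [map_star, hz, star_neg, mul_neg, sub_neg_eq_add, add_eq_zero_iff_eq_neg']
      using hconst (star z)
  have hsq : star (star z * z) * (star z * z) = 0 :=
    calc star (star z * z) * (star z * z) = star z * (z * star z) * z := by
          rw [star_mul, star_star]; noncomm_ring
      _ = -(star z * star z * (z * z)) := by rw [hanti]; noncomm_ring
      _ = 0 := by rw [hzz, mul_zero, neg_zero]
  exact (CStarRing.star_mul_self_eq_zero_iff z).mp
    ((CStarRing.star_mul_self_eq_zero_iff _).mp hsq)

theorem map_eq_of_isAsymptoticallyCentral {u : A} (hu : u ∈ unitary A) (huo : Θ u = -u)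
    {x : A} (hx : IsAsymptoticallyCentral T x) : Θ x = x := by
  set z := oddPart Θ x
  have hz : IsAsymptoticallyCentral T z := fun y => by
    have h := ((hx y).sub (hx.map Θ S.parity_translate y)).const_smul (2 : ℂ)⁻¹
    rw [sub_zero, smul_zero] at h
    refine h.congr fun k => ?_
    simp only [z, oddPart, map_smul, map_sub, sub_mul, mul_sub, smul_mul_assoc,
      mul_smul_comm, smul_sub]
    abel
  -- `T k z` asymptotically commutes and anticommutes with `u`, so `2 T k z u → 0`.
  have h2 : Tendsto (fun k => T k (z + z) * u) cofinite (𝓝 0) := by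
    have h := (hz u).add (S.tendsto_mul_sub_mul_map_of_map_eq_neg
      (map_oddPart S.parity_involutive x) u)
    rw [add_zero] at h
    refine h.congr fun k => ?_
    rw [huo, mul_neg, map_add, add_mul]
    abel
  have hnorm : ‖z + z‖ = 0 := tendsto_const_nhds_iff.mp <| by
    simpa only [CStarRing.norm_mul_mem_unitary _ hu, StarAlgEquiv.norm_map, norm_zero] using h2.norm
  exact oddPart_eq_zero_iff.mp
    (eq_zero_of_eq_neg (eq_neg_of_add_eq_zero_left (norm_eq_zero.mp hnorm)))

theorem map_parity_comm {u : A} (hu : u ∈ unitary A) (huo : Θ u = -u) (α : A ≃⋆ₐ[ℂ] A)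
    (hα : ∀ k x, α (T k x) = T k (α x)) (x : A) : α (Θ x) = Θ (α x) := by
  have hα' : ∀ k x, α.symm (T k x) = T k (α.symm x) := fun k x =>
    α.symm_apply_eq.mpr (by rw [hα, StarAlgEquiv.apply_symm_apply])
  have heven : ∀ x, Θ x = x → Θ (α x) = α x := fun x hx =>
    S.map_eq_of_isAsymptoticallyCentral hu huo ((S.isAsymptoticallyCentral_of_map_eq hx).map α hα)
  have hv : α.symm u ∈ unitary A := Unitary.map_mem α.symm hu
  have hβ : (α.trans Θ).trans α.symm = Θ :=
    eq_parity_of_fixes_even S.parity_involutive S.parity_translate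
      (fun z => S.eq_zero_of_map_eq_neg_of_forall_translate_eq)
      (fun k x => by simp only [StarAlgEquiv.trans_apply, hα, S.parity_translate, hα'])
      (fun x hx => by
        simp only [StarAlgEquiv.trans_apply, heven x hx, StarAlgEquiv.symm_apply_apply])
      hu huo hv
      (by simp only [StarAlgEquiv.trans_apply, StarAlgEquiv.apply_symm_apply, huo, map_neg])
  have h := DFunLike.congr_fun hβ x
  rw [StarAlgEquiv.trans_apply, StarAlgEquiv.trans_apply, StarAlgEquiv.symm_apply_eq] at h
  exact h.symm

end IsFermionLattice

end Lattice

end CAR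

end

open CAR

/-- An element `x` of the CAR algebra `A` over `ℤ^ν` (with `ν ≥ 1`) is even
(`Θ x = x`) if and only if it is asymptotically central under lattice translations:
`‖[τ_k x, y]‖ → 0` as `|k| → ∞` (i.e. along the cofinite filter on `ℤ^ν`) for all `y ∈ A`.
Consequently, any automorphism `α` of `A` commuting with all lattice translations `τ_k`
(`k ∈ ℤ^ν`) commutes with the parity automorphism `Θ`. -/
theorem car_even_iff_asymptotically_central
    {ν : ℕ} (hν : 0 < ν) {A : Type*} [CStarAlgebra A]
    (a : (Fin ν → ℤ) → A)
    (hCAR₁ : ∀ i j, star (a i) * a j + a j * star (a i) = if i = j then (1 : A) else 0)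
    (hCAR₂ : ∀ i j, a i * a j + a j * a i = 0)
    (hgen : carSub a Set.univ = ⊤)
    (Θ : A ≃⋆ₐ[ℂ] A)
    (hΘ : ∀ i, Θ (a i) = - a i)
    (T : (Fin ν → ℤ) → (A ≃⋆ₐ[ℂ] A))
    (hT : ∀ k i, T k (a i) = a (i + k)) :
    (∀ x : A, Θ x = x ↔
      ∀ y : A, Filter.Tendsto (fun k : Fin ν → ℤ => ‖T k x * y - y * T k x‖)
        Filter.cofinite (nhds 0)) ∧
    (∀ α : A ≃⋆ₐ[ℂ] A, (∀ (k : Fin ν → ℤ) (x : A), α (T k x) = T k (α x)) →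
      ∀ x : A, α (Θ x) = Θ (α x)) := by
  have hΘΘ : Θ.trans Θ = StarAlgEquiv.refl ℂ A :=
    starAlgEquiv_ext_of_dense_adjoin hgen fun i => by simp [hΘ]
  have hΘT : ∀ k, (T k).trans Θ = Θ.trans (T k) := fun k =>
    starAlgEquiv_ext_of_dense_adjoin hgen fun i => by simp [hΘ, hT]
  have S : IsFermionLattice a Θ T :=
    { mul_anticomm := fun i j _ => eq_neg_of_add_eq_zero_left (hCAR₂ i j)
      star_mul_anticomm := fun i j hij =>
        eq_neg_of_add_eq_zero_left (by simpa [hij] using hCAR₁ i j)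
      parity_apply := hΘ
      parity_involutive := DFunLike.congr_fun hΘΘ
      translate_apply := hT
      parity_translate := fun k => DFunLike.congr_fun (hΘT k)
      dense_local := dense_iUnion_adjoin_finset hgen }
  have : Nonempty (Fin ν) := ⟨⟨0, hν⟩⟩
  have hu : a 0 + star (a 0) ∈ unitary A :=
    add_star_mem_unitary (eq_zero_of_eq_neg (eq_neg_of_add_eq_zero_left (hCAR₂ 0 0)))
      (by simpa using hCAR₁ 0 0)
  have huo : Θ (a 0 + star (a 0)) = -(a 0 + star (a 0)) := by
    rw [map_add, map_star, hΘ, star_neg, neg_add]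
  refine ⟨fun x => ⟨fun hx y => ?_, fun hx => ?_⟩, fun α hα => S.map_parity_comm hu huo α hα⟩
  · exact tendsto_zero_iff_norm_tendsto_zero.mp (S.isAsymptoticallyCentral_of_map_eq hx y)
  · exact S.map_eq_of_isAsymptoticallyCentral hu huo fun y =>
      tendsto_zero_iff_norm_tendsto_zero.mpr (hx y)
end
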